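/- arXiv:1212.4654 — 5 statements merged into one kernel-verified Lean document; each statement's English description precedes it below -/
import Mathlib

section
/- Let q = 2^t with t ≥ 2, n = q+1, a = q/2, and fix 1 ≤ i ≤ a−1. The union of cyclotomic cosets C_{a−i} ∪ C_{a−i+1} ∪ … ∪ C_a modulo n has exactly 2(i+1) elements and contains the 2i+2 consecutive integers a−i, a−i+1, …, a+i+1. -/
/-- The q-ary cyclotomic coset of `s` modulo `n`. -/
def cyclotomicCoset (q n s : ℕ) : Set ℕ := {x | ∃ j : ℕ, x = s * q ^ j % n}

lemma mul_q_mod (q n s : ℕ) (hn : n = q + 1) (h1 : 0 < s) (h2 : s < n) :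
    s * q % n = n - s := by
  have key : s * q = (n - s) + (s - 1) * n := by
    subst hn
    cases s with
    | zero => omega
    | succ k =>
      have h3 : k ≤ q := by omega
      have h4 : (k + 1) * q = k * q + q := by ring
      have h5 : k * (q + 1) = k * q + k := by ring
      show (k + 1) * q = (q + 1 - (k + 1)) + (k + 1 - 1) * (q + 1)
      rw [Nat.add_sub_cancel]
      omega
  rw [key, Nat.add_mul_mod_self_right, Nat.mod_eq_of_lt (by omega)]

lemma pow_mod (q n s : ℕ) (hn : n = q + 1) (h1 : 0 < s) (h2 : s < n) (j : ℕ) :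
    s * q ^ j % n = if j % 2 = 0 then s else n - s := by
  induction j with
  | zero => simp [Nat.mod_eq_of_lt h2]
  | succ k ih =>
    have step : s * q ^ (k + 1) % n = (s * q ^ k % n) * q % n := by
      rw [pow_succ, ← mul_assoc, Nat.mod_mul_mod]
    rw [step, ih]
    by_cases hk : k % 2 = 0
    · simp only [hk, if_true]
      rw [mul_q_mod q n s hn h1 h2]
      have : (k + 1) % 2 = 1 := by omega
      simp [this]
    · simp only [hk, if_false]
      rw [mul_q_mod q n (n - s) hn (by omega) (by omega)]
      have h2' : (k + 1) % 2 = 0 := by omega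
      simp [h2']
      omega

lemma coset_eq (q n s : ℕ) (hn : n = q + 1) (h1 : 0 < s) (h2 : s < n) :
    cyclotomicCoset q n s = {s, n - s} := by
  ext x
  constructor
  · rintro ⟨j, rfl⟩
    rw [pow_mod q n s hn h1 h2]
    by_cases hj : j % 2 = 0 <;> simp [hj]
  · rintro (rfl | rfl)
    · exact ⟨0, by simp [Nat.mod_eq_of_lt h2]⟩
    · exact ⟨1, by rw [pow_one, mul_q_mod q n s hn h1 h2]⟩

theorem union_of_cosets_card (t q n a i : ℕ) (ht : 2 ≤ t) (hq : q = 2 ^ t)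
    (hn : n = q + 1) (ha : a = q / 2) (hi1 : 1 ≤ i) (hi2 : i ≤ a - 1) :
    (⋃ j ∈ Set.Iic i, cyclotomicCoset q n (a - j)).ncard = 2 * (i + 1) ∧
    (∀ s, a - i ≤ s → s ≤ a + i + 1 →
      s ∈ ⋃ j ∈ Set.Iic i, cyclotomicCoset q n (a - j)) := by
  have hq4 : 4 ≤ q := by
    subst hq
    calc 4 = 2 ^ 2 := by norm_num
    _ ≤ 2 ^ t := Nat.pow_le_pow_right (by norm_num) ht
  have hqe : q = 2 * 2 ^ (t - 1) := by
    subst hq; rw [← pow_succ']; congr 1; omega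
  have h2a : q = 2 * a := by subst ha; omega
  have ha2 : 2 ≤ a := by omega
  have hia : i + 1 ≤ a := by omega
  have hn2 : n = 2 * a + 1 := by omega
  clear ha hq hqe ht hq4 hi2
  have hunion : (⋃ j ∈ Set.Iic i, cyclotomicCoset q n (a - j)) =
      ↑(Finset.Icc (a - i) (a + i + 1)) := by
    ext x
    simp only [Set.mem_iUnion, Set.mem_Iic, Finset.coe_Icc, Set.mem_Icc]
    constructor
    · rintro ⟨j, hj, hx⟩
      rw [coset_eq q n (a - j) hn (by omega) (by omega)] at hx
      rcases hx with rfl | rfl <;> omega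
    · rintro ⟨hx1, hx2⟩
      by_cases hxa : x ≤ a
      · refine ⟨a - x, by omega, ?_⟩
        rw [coset_eq q n (a - (a - x)) hn (by omega) (by omega)]
        left; show x = a - (a - x); omega
      · refine ⟨x - (a + 1), by omega, ?_⟩
        rw [coset_eq q n (a - (x - (a + 1))) hn (by omega) (by omega)]
        right; show x = n - (a - (x - (a + 1))); omega
  rw [hunion]
  constructor
  · rw [Set.ncard_coe_finset, Nat.card_Icc]
    omega
  · intro s hs1 hs2
    simp only [Finset.coe_Icc, Set.mem_Icc]
    omega
end

section
/- Let q = 2^t with t ≥ 2, n = q+1, a = q/2, and 1 ≤ i ≤ a−1. Let α be a primitive n-th root of unity in F_{q^2}, and let C be the cyclic BCH code of length n over F_q with generator polynomial g(x) = lcm of the minimal polynomials over F_q of α^{a−i}, α^{a−i+1}, …, α^a. Then C has dimension n − 2(i+1) and minimum distance exactly 2i+3; in particular C is an MDS code with parameters [n, n−2i−2, 2i+3]_q. -/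
open Finset Matrix

/-- The evaluation-at-`α^s` parity-check functional: `c ↦ ∑ j, c j • α^(s·j)`,
an `F`-linear map from `Fin n → F` to the extension field `E`. -/
noncomputable def bchCheck (F E : Type*) [Field F] [Field E] [Algebra F E]
    (n : ℕ) (α : E) (s : ℕ) : (Fin n → F) →ₗ[F] E where
  toFun c := ∑ j : Fin n, c j • α ^ (s * (j : ℕ))
  map_add' x y := by simp [add_smul, Finset.sum_add_distrib]
  map_smul' r x := by simp [smul_smul, Finset.smul_sum]

/-- The cyclic (BCH) code of length `n` over `F` with defining set `Z`, i.e. the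
codewords `c` with `∑ j, c j α^{s j} = 0` for all `s ∈ Z`; this is exactly the code
with generator polynomial the lcm of the minimal polynomials of `α^s`, `s ∈ Z`. -/
noncomputable def bchCode (F E : Type*) [Field F] [Field E] [Algebra F E]
    (n : ℕ) (α : E) (Z : Set ℕ) : Submodule F (Fin n → F) :=
  ⨅ s ∈ Z, LinearMap.ker (bchCheck F E n α s)

lemma bchCheck_apply {F E : Type*} [Field F] [Field E] [Algebra F E]
    (n : ℕ) (α : E) (s : ℕ) (c : Fin n → F) :
    bchCheck F E n α s c = ∑ j : Fin n, c j • α ^ (s * (j : ℕ)) := rfl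

lemma bchCheck_mod {F E : Type*} [Field F] [Field E] [Algebra F E]
    {n : ℕ} (α : E) (hα : orderOf α = n) (s : ℕ) (c : Fin n → F) :
    bchCheck F E n α (s % n) c = bchCheck F E n α s c := by
  rw [bchCheck_apply, bchCheck_apply]
  refine Finset.sum_congr rfl fun j _ => ?_
  have hpow : α ^ (s % n) = α ^ s := by rw [← hα]; exact pow_mod_orderOf α s
  rw [pow_mul, pow_mul, hpow]

lemma pow_inj_of_order {E : Type*} [Field E] {α : E} {n : ℕ}
    (hα : orderOf α = n) (hα0 : α ≠ 0) {u v : ℕ} (hu : u < n) (hv : v < n)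
    (h : α ^ u = α ^ v) : u = v := by
  by_contra hne
  wlog hlt : u < v generalizing u v
  · exact this hv hu h.symm (Ne.symm hne) (by omega)
  have h2 : α ^ (v - u) = 1 := by
    refine mul_left_cancel₀ (pow_ne_zero u hα0) ?_
    rw [mul_one, ← pow_add, show u + (v - u) = v by omega, ← h]
  have h3 : n ∣ v - u := hα ▸ orderOf_dvd_of_pow_eq_one h2
  have := Nat.le_of_dvd (by omega) h3
  omega

lemma vandermonde_trick {E : Type*} [Field E] {n m b : ℕ} (α : E)
    (hα : orderOf α = n) (hα0 : α ≠ 0)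
    (T : Finset (Fin n)) (hT : T.card = m)
    (c : Fin n → E) (hsupp : ∀ j, c j ≠ 0 → j ∈ T)
    (hch : ∀ k : Fin m, ∑ j : Fin n, c j * α ^ ((b + (k : ℕ)) * (j : ℕ)) = 0) :
    c = 0 := by
  have e : Fin m ≃ {x // x ∈ T} :=
    (Fintype.equivFinOfCardEq (by rw [Fintype.card_coe, hT])).symm
  set x : Fin m → E := fun l => α ^ ((e l : Fin n) : ℕ) with hx
  set d : Fin m → E := fun l => α ^ (b * ((e l : Fin n) : ℕ)) with hd
  set M : Matrix (Fin m) (Fin m) E := (Matrix.vandermonde x)ᵀ * Matrix.diagonal d with hM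
  have h1 : ∀ k l : Fin m, M k l = α ^ ((b + (k : ℕ)) * ((e l : Fin n) : ℕ)) := by
    intro k l
    rw [hM, Matrix.mul_diagonal, Matrix.transpose_apply, Matrix.vandermonde_apply, hx, hd]
    rw [← pow_mul, ← pow_add]
    congr 1
    ring
  have hMv : M.mulVec (fun l => c (e l)) = 0 := by
    funext k
    show ∑ l : Fin m, M k l * c (e l) = 0
    calc ∑ l : Fin m, M k l * c (e l)
        = ∑ l : Fin m, c ((e l : Fin n)) * α ^ ((b + (k : ℕ)) * ((e l : Fin n) : ℕ)) := by
          refine Finset.sum_congr rfl fun l _ => ?_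
          rw [h1 k l, mul_comm]
      _ = ∑ j : {x // x ∈ T}, c (j : Fin n) * α ^ ((b + (k : ℕ)) * ((j : Fin n) : ℕ)) :=
          Equiv.sum_comp e (fun j : {x // x ∈ T} => c (j : Fin n) * α ^ ((b + (k : ℕ)) * ((j : Fin n) : ℕ)))
      _ = ∑ j ∈ T, c j * α ^ ((b + (k : ℕ)) * (j : ℕ)) :=
          Finset.sum_coe_sort T (fun j => c j * α ^ ((b + (k : ℕ)) * (j : ℕ)))
      _ = ∑ j : Fin n, c j * α ^ ((b + (k : ℕ)) * (j : ℕ)) :=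
          Finset.sum_subset T.subset_univ (fun j _ hj => by
            rw [of_not_not (fun h => hj (hsupp j h)), zero_mul])
      _ = 0 := hch k
  have hdet : M.det ≠ 0 := by
    rw [hM, Matrix.det_mul, Matrix.det_transpose, Matrix.det_diagonal]
    refine mul_ne_zero (Matrix.det_vandermonde_ne_zero_iff.mpr ?_)
      (Finset.prod_ne_zero_iff.mpr fun l _ => pow_ne_zero _ hα0)
    intro l1 l2 h
    have hval : ((e l1 : Fin n) : ℕ) = ((e l2 : Fin n) : ℕ) :=
      pow_inj_of_order hα hα0 (hα ▸ (e l1 : Fin n).isLt) (hα ▸ (e l2 : Fin n).isLt) h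
    exact e.injective (Subtype.ext (Fin.ext hval))
  have hv0 : (fun l => c (e l)) = 0 := Matrix.eq_zero_of_mulVec_eq_zero hdet hMv
  funext j
  by_cases hj : j ∈ T
  · have := congr_fun hv0 (e.symm ⟨j, hj⟩)
    simpa using this
  · exact of_not_not fun h => hj (hsupp j h)

lemma bchCheck_conj {F E : Type*} [Field F] [Fintype F] [Field E] [Fintype E] [Algebra F E]
    {t q n : ℕ} (ht : 1 ≤ t) (hq : q = 2 ^ t) (hF : Fintype.card F = q)
    (hE : Fintype.card E = q ^ 2) (hn : n = q + 1)
    (α : E) (hα : orderOf α = n) {s s' : ℕ} (hss : n ∣ s + s') (c : Fin n → F)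
    (h : bchCheck F E n α s c = 0) : bchCheck F E n α s' c = 0 := by
  subst hn
  have hq2 : 2 ≤ q := by
    subst hq
    calc 2 = 2 ^ 1 := by norm_num
    _ ≤ 2 ^ t := Nat.pow_le_pow_right (by norm_num) ht
  have hα1 : α ^ (q + 1) = 1 := hα ▸ pow_orderOf_eq_one α
  have hα0 : α ≠ 0 := fun h0 => by
    rw [h0, zero_pow (by omega : q + 1 ≠ 0)] at hα1
    exact one_ne_zero hα1.symm
  have h2E : (2 : E) = 0 := by
    have h1 : ((q ^ 2 : ℕ) : E) = 0 := by rw [← hE]; exact FiniteField.cast_card_eq_zero E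
    have h2 : ((q : ℕ) : E) = 0 := by
      push_cast at h1
      exact pow_eq_zero_iff (two_ne_zero) |>.mp h1
    rw [hq] at h2
    push_cast at h2
    exact pow_eq_zero_iff (by omega : t ≠ 0) |>.mp h2
  haveI : Fact (Nat.Prime 2) := ⟨Nat.prime_two⟩
  haveI hc2 : CharP E 2 := by
    haveI := ringChar.charP E
    have hdvd : ringChar E ∣ 2 :=
      (CharP.cast_eq_zero_iff E (ringChar E) 2).mp (by exact_mod_cast h2E)
    have hne1 : ringChar E ≠ 1 := CharP.char_ne_one E (ringChar E)
    have hr : ringChar E = 2 := ((Nat.dvd_prime Nat.prime_two).mp hdvd).resolve_left hne1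
    exact hr ▸ ringChar.charP E
  have hcq : ∀ y : F, y ^ q = y := fun y => by rw [← hF]; exact FiniteField.pow_card y
  have φdef : ∀ x : E, iterateFrobenius E 2 t x = x ^ q := fun x => by
    rw [iterateFrobenius_def, hq]
  have key : bchCheck F E (q + 1) α s' c = iterateFrobenius E 2 t (bchCheck F E (q + 1) α s c) := by
    rw [bchCheck_apply, bchCheck_apply, map_sum]
    refine Finset.sum_congr rfl fun j _ => ?_
    rw [φdef, Algebra.smul_def, Algebra.smul_def, mul_pow, ← map_pow, hcq]
    congr 1
    rw [← pow_mul]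
    refine mul_right_cancel₀ (pow_ne_zero (s * (j : ℕ)) hα0) ?_
    rw [← pow_add, ← pow_add]
    obtain ⟨dd, hdd⟩ := hss
    have e1 : s' * (j : ℕ) + s * (j : ℕ) = (q + 1) * (dd * (j : ℕ)) := by
      calc s' * (j : ℕ) + s * (j : ℕ) = (s + s') * (j : ℕ) := by ring
      _ = (q + 1) * (dd * (j : ℕ)) := by rw [hdd]; ring
    have e2 : s * (j : ℕ) * q + s * (j : ℕ) = (q + 1) * (s * (j : ℕ)) := by ring
    rw [e1, e2]
    simp [pow_mul, hα1]
  rw [key, h, map_zero]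

/-- Extension by zero outside a finset, as a linear map. -/
noncomputable def extendByZero (F : Type*) [Field F] {n : ℕ} (T : Finset (Fin n)) :
    ({x // x ∈ T} → F) →ₗ[F] (Fin n → F) where
  toFun c j := if h : j ∈ T then c ⟨j, h⟩ else 0
  map_add' x y := by funext j; by_cases h : j ∈ T <;> simp [h]
  map_smul' r x := by funext j; by_cases h : j ∈ T <;> simp [h]

theorem bch_code_mds_even_case (t q n a i : ℕ) (ht : 2 ≤ t) (hq : q = 2 ^ t)
    (hn : n = q + 1) (ha : a = q / 2) (hi1 : 1 ≤ i) (hi2 : i ≤ a - 1)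
    (F E : Type*) [Field F] [Fintype F] [DecidableEq F] [Field E] [Fintype E] [Algebra F E]
    (hF : Fintype.card F = q) (hE : Fintype.card E = q ^ 2)
    (α : E) (hα : orderOf α = n)
    (C : Submodule F (Fin n → F))
    (hC : C = bchCode F E n α (⋃ j ∈ Set.Iic i, cyclotomicCoset q n (a - j))) :
    Module.finrank F C = n - 2 * (i + 1) ∧
    (∀ c ∈ C, c ≠ 0 → 2 * i + 3 ≤ hammingNorm c) ∧
    (∃ c ∈ C, c ≠ 0 ∧ hammingNorm c = 2 * i + 3) ∧
    2 * i + 3 = n - (n - 2 * i - 2) + 1 := by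
  -- numerics
  have hq4 : 4 ≤ q := by
    subst hq
    calc 4 = 2 ^ 2 := by norm_num
    _ ≤ 2 ^ t := Nat.pow_le_pow_right (by norm_num) ht
  have h2q : 2 ∣ q := by subst hq; exact dvd_pow_self 2 (by omega)
  have hq2a : q = 2 * a := by rw [ha]; exact (Nat.mul_div_cancel' h2q).symm
  have ha2 : 2 ≤ a := by omega
  have hia : i + 1 ≤ a := by omega
  have hn' : n = 2 * a + 1 := by omega
  have hn0 : 0 < n := by omega
  have hα1 : α ^ n = 1 := hα ▸ pow_orderOf_eq_one α
  have hα0 : α ≠ 0 := fun h0 => by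
    rw [h0, zero_pow (by omega : n ≠ 0)] at hα1
    exact one_ne_zero hα1.symm
  -- q^2 ≡ 1 mod n
  have hq2mod : q ^ 2 ≡ 1 [MOD n] := by
    have hdvd : n ∣ q ^ 2 - 1 := by
      obtain ⟨m, rfl⟩ : ∃ m, q = m + 1 := ⟨q - 1, by omega⟩
      refine ⟨m, ?_⟩
      have e1 : (m + 1) ^ 2 = n * m + 1 := by rw [hn]; ring
      omega
    exact Nat.ModEq.symm ((Nat.modEq_iff_dvd' (Nat.one_le_pow _ _ (by omega))).mpr hdvd)
  -- odd powers: n ∣ q^e + 1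
  have hodd : ∀ e : ℕ, Odd e → n ∣ q ^ e + 1 := by
    intro e he
    have h1 : (q : ℤ) ≡ -1 [ZMOD (n : ℤ)] := by
      refine Int.ModEq.symm (Int.modEq_iff_dvd.mpr ?_)
      exact ⟨1, by push_cast [hn]; ring⟩
    have h2 : (q : ℤ) ^ e ≡ -1 [ZMOD (n : ℤ)] := by
      calc (q : ℤ) ^ e ≡ (-1) ^ e [ZMOD (n : ℤ)] := h1.pow e
      _ = -1 := Odd.neg_one_pow he
    have h3 : (n : ℤ) ∣ (q : ℤ) ^ e + 1 := by
      have h4 := Int.ModEq.dvd h2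
      rw [show (-1 : ℤ) - (q : ℤ) ^ e = -((q : ℤ) ^ e + 1) by ring] at h4
      exact dvd_neg.mp h4
    exact_mod_cast h3
  -- membership characterization
  have hcheq : ∀ (c : Fin n → F) (x y : ℕ), x % n = y % n →
      bchCheck F E n α x c = bchCheck F E n α y c := by
    intro c x y hxy
    rw [← bchCheck_mod α hα x c, hxy, bchCheck_mod α hα y c]
  have hmem : ∀ c : Fin n → F, c ∈ C ↔ ∀ j ≤ i, bchCheck F E n α (a - j) c = 0 := by
    intro c
    rw [hC]
    simp only [bchCode, Submodule.mem_iInf, LinearMap.mem_ker]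
    constructor
    · intro h j hj
      have hmem' : (a - j) ∈ ⋃ j ∈ Set.Iic i, cyclotomicCoset q n (a - j) := by
        refine Set.mem_iUnion₂.mpr ⟨j, hj, ⟨0, ?_⟩⟩
        simp [Nat.mod_eq_of_lt (show a - j < n by omega)]
      exact h _ hmem'
    · intro h s hs
      obtain ⟨j₀, hj₀, e, hse⟩ : ∃ j₀, j₀ ≤ i ∧ ∃ e, s = (a - j₀) * q ^ e % n := by
        simpa [cyclotomicCoset, Set.mem_iUnion, Set.mem_Iic] using hs
      obtain ⟨e, rfl⟩ := hse
      rcases Nat.even_or_odd e with he | he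
      · obtain ⟨f, rfl⟩ := he
        have hqe : q ^ (f + f) ≡ 1 [MOD n] := by
          have : q ^ (f + f) = (q ^ 2) ^ f := by ring
          rw [this]
          simpa using hq2mod.pow f
        have hmeq : (a - j₀) * q ^ (f + f) ≡ (a - j₀) [MOD n] := by
          simpa using (Nat.ModEq.mul_left (a - j₀) hqe)
        have := hcheq c ((a - j₀) * q ^ (f + f) % n) (a - j₀) (by
          rw [Nat.mod_mod_of_dvd _ dvd_rfl]; exact hmeq)
        rw [this]
        exact h j₀ hj₀
      · have hdvd1 : n ∣ (a - j₀) * (q ^ e + 1) := (hodd e he).mul_left (a - j₀)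
        have hdvd2 : n ∣ (a - j₀) + (a - j₀) * q ^ e % n := by
          have hm1 : ((a - j₀) + (a - j₀) * q ^ e % n) ≡ ((a - j₀) + (a - j₀) * q ^ e) [MOD n] :=
            Nat.ModEq.add_left _ (Nat.mod_modEq _ n)
          have hm2 : ((a - j₀) + (a - j₀) * q ^ e) ≡ 0 [MOD n] :=
            (Nat.modEq_zero_iff_dvd).mpr (by
              have heq : (a - j₀) + (a - j₀) * q ^ e = (a - j₀) * (q ^ e + 1) := by ring
              rw [heq]; exact hdvd1)
          exact (Nat.modEq_zero_iff_dvd).mp (hm1.trans hm2)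
        exact bchCheck_conj (by omega) hq hF hE hn α hα hdvd2 c (h j₀ hj₀)
  -- the key Vandermonde bound
  have hsum : ∀ (c : Fin n → F) (s : ℕ),
      (∑ j : Fin n, algebraMap F E (c j) * α ^ (s * (j : ℕ))) = bchCheck F E n α s c := by
    intro c s
    rw [bchCheck_apply]
    exact Finset.sum_congr rfl fun j _ => (Algebra.smul_def _ _).symm
  have key : ∀ c : Fin n → F, c ∈ C → hammingNorm c ≤ 2 * i + 2 → c = 0 := by
    intro c hc hw
    have hch0 : ∀ j ≤ i, bchCheck F E n α (a - j) c = 0 := (hmem c).mp hc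
    have hS : hammingNorm c = #(Finset.univ.filter (fun j => c j ≠ 0)) := rfl
    obtain ⟨T, hsub, -, hT⟩ := Finset.exists_subsuperset_card_eq (n := 2 * i + 2)
      (Finset.subset_univ (Finset.univ.filter (fun j => c j ≠ 0)))
      (by rw [← hS]; exact hw)
      (by rw [Finset.card_univ, Fintype.card_fin]; omega)
    have hch : ∀ k : Fin (2 * i + 2),
        ∑ j : Fin n, algebraMap F E (c j) * α ^ (((a - i) + (k : ℕ)) * (j : ℕ)) = 0 := by
      intro k
      rw [hsum]
      have hk2 : (k : ℕ) < 2 * i + 2 := k.isLt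
      by_cases hk : (k : ℕ) ≤ i
      · have heq : (a - i) + (k : ℕ) = a - (i - (k : ℕ)) := by omega
        rw [heq]
        exact hch0 _ (by omega)
      · push_neg at hk
        have hs0 : (a - ((k : ℕ) - i - 1)) + ((a - i) + (k : ℕ)) = n := by omega
        exact bchCheck_conj (by omega) hq hF hE hn α hα
          (⟨1, by omega⟩ : n ∣ (a - ((k : ℕ) - i - 1)) + ((a - i) + (k : ℕ)))
          c (hch0 _ (by omega))
    have h0 : (fun j => algebraMap F E (c j)) = 0 :=
      vandermonde_trick α hα hα0 T hT _
        (fun j hj => hsub (Finset.mem_filter.mpr ⟨Finset.mem_univ j,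
          fun h => hj (by rw [h, map_zero])⟩))
        hch
    funext j
    have h1 : algebraMap F E (c j) = 0 := by simpa using congr_fun h0 j
    exact (map_eq_zero _).mp h1
  -- the parity-check map
  set ψ : (Fin n → F) →ₗ[F] (Fin (i + 1) → E) :=
    LinearMap.pi (fun k : Fin (i + 1) => bchCheck F E n α (a - (k : ℕ))) with hψ
  have hCker : C = LinearMap.ker ψ := by
    ext c
    rw [hmem c, LinearMap.mem_ker]
    constructor
    · intro h
      funext k
      have := h (k : ℕ) (Nat.lt_succ_iff.mp k.isLt)
      simpa [hψ, LinearMap.pi_apply] using this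
    · intro h j hj
      have := congr_fun h ⟨j, by omega⟩
      simpa [hψ, LinearMap.pi_apply] using this
  have hfe : Module.finrank F E = 2 := by
    have hcard := Module.card_eq_pow_finrank (K := F) (V := E)
    rw [hF, hE] at hcard
    exact (Nat.pow_right_injective (by omega) hcard).symm
  have hcod : Module.finrank F (Fin (i + 1) → E) = 2 * i + 2 := by
    have hsc : ∑ _k : Fin (i + 1), Module.finrank F E = (i + 1) * 2 := by
      rw [Finset.sum_const, Finset.card_univ, Fintype.card_fin, hfe, smul_eq_mul]
    rw [Module.finrank_pi_fintype F, hsc]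
    omega
  obtain ⟨T, hT⟩ : ∃ T : Finset (Fin n), T.card = 2 * i + 2 := by
    obtain ⟨T, _, hT⟩ := Finset.exists_subset_card_eq
      (show 2 * i + 2 ≤ #(Finset.univ : Finset (Fin n)) by
        rw [Finset.card_univ, Fintype.card_fin]; omega)
    exact ⟨T, hT⟩
  have hinj : Function.Injective (ψ ∘ₗ extendByZero F T) := by
    rw [← LinearMap.ker_eq_bot, LinearMap.ker_eq_bot']
    intro c0 hc0
    have hmemC : extendByZero F T c0 ∈ C := by
      rw [hCker]
      exact LinearMap.mem_ker.mpr hc0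
    have hwt : hammingNorm (extendByZero F T c0) ≤ 2 * i + 2 := by
      have hsub2 : (Finset.univ.filter (fun j => extendByZero F T c0 j ≠ 0)) ⊆ T := by
        intro j hj
        rw [Finset.mem_filter] at hj
        by_contra hjT
        exact hj.2 (by simp [extendByZero, hjT])
      calc hammingNorm (extendByZero F T c0) = _ := rfl
      _ ≤ T.card := Finset.card_le_card hsub2
      _ = 2 * i + 2 := hT
    have h0 := key _ hmemC hwt
    funext u
    have hu := congr_fun h0 (u : Fin n)
    simpa [extendByZero, u.2] using hu
  have hrange : LinearMap.range ψ = ⊤ := by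
    have h1 : Module.finrank F ↥(LinearMap.range (ψ ∘ₗ extendByZero F T)) = 2 * i + 2 := by
      rw [LinearMap.finrank_range_of_inj hinj, Module.finrank_fintype_fun_eq_card,
        Fintype.card_coe, hT]
    have h2 : LinearMap.range (ψ ∘ₗ extendByZero F T) ≤ LinearMap.range ψ :=
      LinearMap.range_comp_le_range _ _
    have h3 := Submodule.finrank_mono h2
    have h4 := Submodule.finrank_le (LinearMap.range ψ)
    rw [h1] at h3
    rw [hcod] at h4
    apply Submodule.eq_top_of_finrank_eq
    rw [hcod]
    omega
  have hdim : Module.finrank F ↥C = n - 2 * (i + 1) := by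
    have hrn := LinearMap.finrank_range_add_finrank_ker ψ
    rw [hrange, finrank_top, hcod, Module.finrank_fintype_fun_eq_card, Fintype.card_fin] at hrn
    rw [hCker]
    omega
  have hlow : ∀ c ∈ C, c ≠ 0 → 2 * i + 3 ≤ hammingNorm c := by
    intro c hc hc0
    by_contra hlt
    push_neg at hlt
    exact hc0 (key c hc (by omega))
  have hex : ∃ c ∈ C, c ≠ 0 ∧ hammingNorm c = 2 * i + 3 := by
    obtain ⟨U, hUsub, hU⟩ := Finset.exists_subset_card_eq
      (show n - (2 * i + 3) ≤ #(Finset.univ : Finset (Fin n)) by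
        rw [Finset.card_univ, Fintype.card_fin]; omega)
    set π : ↥C →ₗ[F] ({x // x ∈ U} → F) :=
      (LinearMap.funLeft F F (fun u : {x // x ∈ U} => (u : Fin n))) ∘ₗ C.subtype with hπ
    have hker : LinearMap.ker π ≠ ⊥ := by
      intro hbot
      have hinj' : Function.Injective π := LinearMap.ker_eq_bot.mp hbot
      have hle := LinearMap.finrank_le_finrank_of_injective hinj'
      rw [hdim, Module.finrank_fintype_fun_eq_card, Fintype.card_coe, hU] at hle
      omega
    obtain ⟨c', hc'mem, hc'ne⟩ := (Submodule.ne_bot_iff _).mp hker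
    refine ⟨(c' : Fin n → F), c'.2, fun h => hc'ne (Subtype.ext h), ?_⟩
    have hzero : ∀ u ∈ U, (c' : Fin n → F) u = 0 := by
      intro u hu
      have h1 : π c' = 0 := LinearMap.mem_ker.mp hc'mem
      have h2 := congr_fun h1 ⟨u, hu⟩
      simpa [hπ, LinearMap.funLeft_apply] using h2
    have hub : hammingNorm (c' : Fin n → F) ≤ 2 * i + 3 := by
      have hsub2 : (Finset.univ.filter (fun j => (c' : Fin n → F) j ≠ 0)) ⊆
          Finset.univ \ U := by
        intro j hj
        rw [Finset.mem_filter] at hj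
        rw [Finset.mem_sdiff]
        exact ⟨Finset.mem_univ j, fun hjU => hj.2 (hzero j hjU)⟩
      calc hammingNorm (c' : Fin n → F) = _ := rfl
      _ ≤ #(Finset.univ \ U) := Finset.card_le_card hsub2
      _ = n - (n - (2 * i + 3)) := by
          rw [Finset.card_sdiff_of_subset hUsub, Finset.card_univ, Fintype.card_fin, hU]
      _ ≤ 2 * i + 3 := by omega
    have hlb := hlow _ c'.2 (fun h => hc'ne (Subtype.ext h))
    omega
  exact ⟨hdim, hlow, hex, by omega⟩
end

section
/- Let C ⊆ F_q^n be a linear [n,k,d] code with parity check matrix H of rank n−k, partitioned into submatrices H_0, H_1, …, H_m (stacked vertically) with rk(H_0) = κ and rk(H_i) ≤ κ for 1 ≤ i ≤ m. If the polynomial matrix G(D) = H̃_0 + H̃_1 D + ⋯ + H̃_m D^m (where H̃_i pads H_i with zero rows to κ rows) is the generator of a convolutional code V and C^⊥ ⊆ C, then V ⊆ V^⊥ (with respect to the Euclidean inner product on F_q[D]^n). -/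
/-- The linear functional `c ↦ ∑ j, v j * c j` on `Fin n → F`. -/
def dotFunctional (F : Type*) [Field F] (n : ℕ) (v : Fin n → F) :
    (Fin n → F) →ₗ[F] F where
  toFun c := ∑ j : Fin n, v j * c j
  map_add' x y := by simp [mul_add, Finset.sum_add_distrib]
  map_smul' r x := by simp [Finset.mul_sum, mul_left_comm]

/-- The Euclidean inner product on `F_q[D]^n`:
`⟨u(D), v(D)⟩ = ∑_i u_i · v_i` where `u_i, v_i ∈ F^n` are the coefficient vectors. -/
noncomputable def polyInner (F : Type*) [Field F] (n : ℕ)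
    (u v : Fin n → Polynomial F) : F :=
  ∑ j : Fin n, (u j).sum fun d a => a * (v j).coeff d

/-!
Every row of every `H_i` lies in `C^⊥ ⊆ C`, so the rows span a self-orthogonal subspace `S` of
`F^n`. The degree-`d` coefficient vector of `u(D) G(D)` is a combination of rows, hence lies in
`S`, and `⟨v(D), w(D)⟩` is the sum over `d` of the inner products of the degree-`d` coefficient
vectors of `v` and `w`.
-/

open Polynomial

theorem dotFunctional_apply {F : Type*} [Field F] {n : ℕ} (v c : Fin n → F) :
    dotFunctional F n v c = v ⬝ᵥ c :=
  rfl

theorem dotProduct_eq_zero_of_mem_span {R σ : Type*} [CommRing R] [Fintype σ]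
    {s : Set (σ → R)} (hs : ∀ a ∈ s, ∀ b ∈ s, a ⬝ᵥ b = 0) {x y : σ → R}
    (hx : x ∈ Submodule.span R s) (hy : y ∈ Submodule.span R s) : x ⬝ᵥ y = 0 := by
  have hy_orth : ∀ a ∈ s, a ⬝ᵥ y = 0 := fun a ha =>
    LinearMap.eqOn_span (f := dotProductBilin R R a) (g := 0) (hs a ha) hy
  exact LinearMap.eqOn_span (f := (dotProductBilin R R).flip y) (g := 0) hy_orth hx

theorem coeff_sum_mul_C_mem_span {R σ ι : Type*} [CommRing R] [Fintype ι]
    (g : ι → σ → R) (a : ι → R[X]) (d : ℕ) :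
    (fun j => (∑ p, a p * C (g p j)).coeff d) ∈ Submodule.span R (Set.range g) := by
  have hcoeff : (fun j => (∑ p, a p * C (g p j)).coeff d) = ∑ p, (a p).coeff d • g p := by
    ext j
    simp [finsetSum_coeff, coeff_mul_C]
  rw [hcoeff]
  exact Submodule.sum_mem _ fun p _ =>
    Submodule.smul_mem _ _ (Submodule.subset_span (Set.mem_range_self p))

theorem polyInner_eq_zero_of_coeff {F : Type*} [Field F] {n : ℕ} (u v : Fin n → F[X])
    (h : ∀ d, (fun j => (u j).coeff d) ⬝ᵥ (fun j => (v j).coeff d) = 0) :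
    polyInner F n u v = 0 := by
  set N := (Finset.univ.sup fun j => (u j).natDegree) + 1
  have hN : ∀ j, (u j).natDegree < N := fun j =>
    Nat.lt_succ_of_le (Finset.le_sup (f := fun j => (u j).natDegree) (Finset.mem_univ j))
  have hsum : ∀ j, ((u j).sum fun d a => a * (v j).coeff d)
      = ∑ d ∈ Finset.range N, (u j).coeff d * (v j).coeff d := fun j =>
    sum_over_range' (f := fun d a => a * (v j).coeff d) (u j) (fun _ => zero_mul _) N (hN j)
  unfold polyInner
  simp only [hsum]
  rw [Finset.sum_comm]
  exact Finset.sum_eq_zero fun d _ => h d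

theorem dual_containing_convolutional_general (F : Type*) [Field F] (n κ m : ℕ)
    (H : Fin (m + 1) → Matrix (Fin κ) (Fin n) F)
    (C : Submodule F (Fin n → F))
    -- `C` is the code with (stacked) parity check matrix `H_0, …, H_m`
    (hC : C = ⨅ (i : Fin (m + 1)) (r : Fin κ),
        LinearMap.ker (dotFunctional F n (fun j => H i r j)))
    -- `C^⊥ ⊆ C`
    (hdual : ∀ u : Fin n → F, (∀ c ∈ C, ∑ j : Fin n, u j * c j = 0) → u ∈ C)
    -- `V` is the convolutional code generated by `G(D) = ∑_i H̃_i D^i`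
    (V : Set (Fin n → Polynomial F))
    (hV : V = {v | ∃ u : Fin κ → Polynomial F, ∀ j : Fin n,
        v j = ∑ r : Fin κ, ∑ i : Fin (m + 1),
          u r * Polynomial.C (H i r j) * Polynomial.X ^ (i : ℕ)}) :
    -- then `V ⊆ V^⊥` for the Euclidean inner product
    ∀ v ∈ V, ∀ w ∈ V, polyInner F n v w = 0 := by
  subst hV hC
  simp only [Submodule.mem_iInf, LinearMap.mem_ker, dotFunctional_apply] at hdual
  let rows : Fin κ × Fin (m + 1) → Fin n → F := fun p => H p.2 p.1
  -- each row lies in `C^⊥ ⊆ C`, hence is orthogonal to every row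
  have hrows : ∀ a ∈ Set.range rows, ∀ b ∈ Set.range rows, a ⬝ᵥ b = 0 := by
    rintro _ ⟨p, rfl⟩ _ ⟨q, rfl⟩
    exact hdual (rows q) (fun c hc => hc q.2 q.1) p.2 p.1
  have hcoeff : ∀ (y : Fin κ → F[X]) (d : ℕ),
      (fun j => (∑ r, ∑ i : Fin (m + 1), y r * C (H i r j) * X ^ (i : ℕ)).coeff d)
        ∈ Submodule.span F (Set.range rows) := fun y d => by
    simpa only [Fintype.sum_prod_type, mul_right_comm (y _)] using
      coeff_sum_mul_C_mem_span rows (fun p => y p.1 * X ^ (p.2 : ℕ)) d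
  rintro v ⟨u, hu⟩ w ⟨u', hu'⟩
  refine polyInner_eq_zero_of_coeff v w fun d => ?_
  simp only [hu, hu']
  exact dotProduct_eq_zero_of_mem_span hrows (hcoeff u d) (hcoeff u' d)

theorem dual_containing_convolutional (F : Type*) [Field F] (n k κ m : ℕ)
    (H : Fin (m + 1) → Matrix (Fin κ) (Fin n) F)
    (hrk0 : (H 0).rank = κ) (hrk : ∀ i, (H i).rank ≤ κ)
    (C : Submodule F (Fin n → F))
    -- `C` is the code with (stacked) parity check matrix `H_0, …, H_m`
    (hC : C = ⨅ (i : Fin (m + 1)) (r : Fin κ),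
        LinearMap.ker (dotFunctional F n (fun j => H i r j)))
    (hk : Module.finrank F C = k)
    -- `C^⊥ ⊆ C`
    (hdual : ∀ u : Fin n → F, (∀ c ∈ C, ∑ j : Fin n, u j * c j = 0) → u ∈ C)
    -- `V` is the convolutional code generated by `G(D) = ∑_i H̃_i D^i`
    (V : Set (Fin n → Polynomial F))
    (hV : V = {v | ∃ u : Fin κ → Polynomial F, ∀ j : Fin n,
        v j = ∑ r : Fin κ, ∑ i : Fin (m + 1),
          u r * Polynomial.C (H i r j) * Polynomial.X ^ (i : ℕ)}) :
    -- then `V ⊆ V^⊥` for the Euclidean inner product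
    ∀ v ∈ V, ∀ w ∈ V, polyInner F n v w = 0 :=
  dual_containing_convolutional_general F n κ m H C hC hdual V hV
end

section
/- Let q = 2^t with t ≥ 3, n = q+1, and a = q/2. For each 1 ≤ i ≤ a−1, there exists a unit-memory convolutional code over F_q with parameters (n, 2i, 2; 1, d_f) where the free distance satisfies d_f ≥ n − 2i − 1. -/
/-- The convolutional code generated by the polynomial matrix `G`. -/
def convCode {F : Type*} [Field F] {k n : ℕ}
    (G : Matrix (Fin k) (Fin n) (Polynomial F)) : Set (Fin n → Polynomial F) :=
  {v | ∃ u : Fin k → Polynomial F, ∀ j, v j = ∑ i : Fin k, u i * G i j}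

/-- A polynomial generator matrix is basic if it has a polynomial right inverse. -/
def isBasic {F : Type*} [Field F] {k n : ℕ}
    (G : Matrix (Fin k) (Fin n) (Polynomial F)) : Prop :=
  ∃ R : Matrix (Fin n) (Fin k) (Polynomial F), G * R = 1

/-- The `i`-th constraint length: the maximal degree in row `i`. -/
def rowDegree {F : Type*} [Field F] {k n : ℕ}
    (G : Matrix (Fin k) (Fin n) (Polynomial F)) (i : Fin k) : ℕ :=
  Finset.univ.sup fun j => (G i j).natDegree

/-- The degree (overall constraint length) `γ = ∑ γ_i` of a generator matrix. -/
def convDegree {F : Type*} [Field F] {k n : ℕ}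
    (G : Matrix (Fin k) (Fin n) (Polynomial F)) : ℕ :=
  ∑ i : Fin k, rowDegree G i

/-- The memory `m = max γ_i` of a generator matrix. -/
def convMemory {F : Type*} [Field F] {k n : ℕ}
    (G : Matrix (Fin k) (Fin n) (Polynomial F)) : ℕ :=
  Finset.univ.sup fun i => rowDegree G i

/-- A basic generator matrix is reduced if its overall constraint length is minimal
among all basic generator matrices of the same code. -/
def isReduced {F : Type*} [Field F] {k n : ℕ}
    (G : Matrix (Fin k) (Fin n) (Polynomial F)) : Prop :=
  isBasic G ∧ ∀ G' : Matrix (Fin k) (Fin n) (Polynomial F),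
    isBasic G' → convCode G' = convCode G → convDegree G ≤ convDegree G'

/-- The weight of `v(D) ∈ F[D]^n`: the total number of nonzero coefficients. -/
def polyWeight {F : Type*} [Field F] [DecidableEq F] {n : ℕ}
    (v : Fin n → Polynomial F) : ℕ :=
  ∑ j : Fin n, (v j).support.card

/-!
Let `k = 2i` and let `S` be a generator matrix of the doubly extended Reed–Solomon code
`[q + 1, k + 2, q - k]`, in systematic form (Lagrange basis) on `k + 2` coordinates. Put its
first `k` rows into `G₀`, its last two rows into the first two rows of `G₁`, and take
`G = G₀ + D G₁`.
Every coefficient of a codeword of `G` is a Reed–Solomon codeword, whence `d_f ≥ q - k`.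
The systematic coordinates give a polynomial right inverse of `G` and a `k × k` minor equal to
`D²`; any other basic generator matrix of the code is `U G` with `det U ≠ 0`, so its
corresponding minor has degree at least `2`, and degree `2` is minimal.
-/

open Polynomial Finset

section GeneratorMatrix

variable {F : Type*} [Field F] {k n : ℕ}

lemma exists_eq_mul_of_convCode_subset {G G' : Matrix (Fin k) (Fin n) F[X]}
    (h : convCode G' ⊆ convCode G) : ∃ U : Matrix (Fin k) (Fin k) F[X], G' = U * G := by
  have hrow : ∀ l, ∃ u : Fin k → F[X], ∀ j, G' l j = ∑ m, u m * G m j := fun l =>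
    h ⟨Pi.single l 1, fun j => by simp [Pi.single_apply]⟩
  choose U hU using hrow
  exact ⟨Matrix.of U, Matrix.ext fun l j => by simp [Matrix.mul_apply, hU]⟩

lemma exists_det_ne_zero_of_convCode_eq {G G' : Matrix (Fin k) (Fin n) F[X]} (hG : isBasic G)
    (h : convCode G' = convCode G) :
    ∃ U : Matrix (Fin k) (Fin k) F[X], U.det ≠ 0 ∧ G' = U * G := by
  obtain ⟨U, hU⟩ := exists_eq_mul_of_convCode_subset h.subset
  obtain ⟨V, hV⟩ := exists_eq_mul_of_convCode_subset h.symm.subset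
  obtain ⟨R, hR⟩ := hG
  have hVU : V * U = 1 := by
    calc V * U = V * U * (G * R) := by rw [hR, Matrix.mul_one]
      _ = 1 := by
        rw [Matrix.mul_assoc, ← Matrix.mul_assoc U, ← hU, ← Matrix.mul_assoc, ← hV, hR]
  exact ⟨U, Matrix.det_ne_zero_of_left_inverse hVU, hU⟩

lemma natDegree_det_submatrix_le (G : Matrix (Fin k) (Fin n) F[X]) (f : Fin k → Fin n) :
    (G.submatrix id f).det.natDegree ≤ convDegree G := by
  rw [Matrix.det_apply']
  refine natDegree_sum_le_of_forall_le _ _ fun σ _ => ?_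
  calc _ ≤ (∏ l, G (σ l) (f l)).natDegree := by
        refine natDegree_mul_le.trans ?_
        rw [natDegree_intCast, zero_add]
        rfl
    _ ≤ ∑ l, rowDegree G (σ l) := (natDegree_prod_le _ _).trans <|
        sum_le_sum fun l _ => le_sup (f := fun j => (G (σ l) j).natDegree) (mem_univ (f l))
    _ = convDegree G := Equiv.sum_comp σ _

/-- The same minor of any other basic generator matrix `U * G` of the code has degree
`deg (det U) + deg (det (G.submatrix id f))`. -/
lemma isReduced_of_convDegree_le_natDegree_det {G : Matrix (Fin k) (Fin n) F[X]}
    (hG : isBasic G) (f : Fin k → Fin n)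
    (hf : convDegree G ≤ (G.submatrix id f).det.natDegree) : isReduced G := by
  refine ⟨hG, fun G' _ hcode => ?_⟩
  obtain ⟨U, hU, rfl⟩ := exists_det_ne_zero_of_convCode_eq hG hcode
  have hminor : ((U * G).submatrix id f).det = U.det * (G.submatrix id f).det :=
    Matrix.det_mul U (G.submatrix id f)
  calc convDegree G ≤ (G.submatrix id f).det.natDegree := hf
    _ ≤ ((U * G).submatrix id f).det.natDegree := by
        rcases eq_or_ne (G.submatrix id f).det 0 with h0 | h0
        · simp [h0]
        · rw [hminor, natDegree_mul hU h0]
          omega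
    _ ≤ convDegree (U * G) := natDegree_det_submatrix_le _ f

end GeneratorMatrix

section FreeDistance

variable {F : Type*} [Field F] {k n : ℕ}

lemma coeff_mem_of_mem_convCode {G : Matrix (Fin k) (Fin n) F[X]} (C : Submodule F (Fin n → F))
    (hG : ∀ l d, (fun j => (G l j).coeff d) ∈ C) {v : Fin n → F[X]} (hv : v ∈ convCode G)
    (d : ℕ) : (fun j => (v j).coeff d) ∈ C := by
  obtain ⟨u, hu⟩ := hv
  have hslice : (fun j => (v j).coeff d) =
      ∑ l, ∑ p ∈ antidiagonal d, (u l).coeff p.1 • fun j => (G l j).coeff p.2 := by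
    ext j
    simp [hu, coeff_mul]
  rw [hslice]
  exact C.sum_mem fun l _ => C.sum_mem fun p _ => C.smul_mem _ (hG l p.2)

lemma card_coeff_ne_zero_le_polyWeight [DecidableEq F] (v : Fin n → F[X]) (d : ℕ) :
    #{j | (v j).coeff d ≠ 0} ≤ polyWeight v := by
  rw [card_filter]
  refine sum_le_sum fun j _ => ?_
  split_ifs with h
  · exact card_pos.2 ⟨d, mem_support_iff.2 h⟩
  · exact Nat.zero_le _

lemma le_polyWeight_of_coeff_mem [DecidableEq F] {G : Matrix (Fin k) (Fin n) F[X]}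
    (C : Submodule F (Fin n → F)) {δ : ℕ}
    (hC : ∀ w ∈ C, w ≠ 0 → δ ≤ #{j | w j ≠ 0})
    (hG : ∀ l d, (fun j => (G l j).coeff d) ∈ C) {v : Fin n → F[X]} (hv : v ∈ convCode G)
    (hv0 : v ≠ 0) : δ ≤ polyWeight v := by
  obtain ⟨j, hj⟩ := Function.ne_iff.1 hv0
  obtain ⟨d, hd⟩ := support_nonempty.2 hj
  calc δ ≤ #{j | (v j).coeff d ≠ 0} :=
        hC _ (coeff_mem_of_mem_convCode C hG hv d) (Function.ne_iff.2 ⟨j, mem_support_iff.1 hd⟩)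
    _ ≤ polyWeight v := card_coeff_ne_zero_le_polyWeight v d

end FreeDistance

section ExtendedReedSolomon

variable {F : Type*} [Field F] {q : ℕ}

/-- Evaluation at the points `x 0, …, x (q-1)` and at infinity, where a polynomial of
degree `< K` takes the value of its coefficient of `X ^ (K - 1)`. -/
noncomputable def extEval (x : Fin q → F) (K : ℕ) : F[X] →ₗ[F] Fin (q + 1) → F :=
  LinearMap.pi (Fin.lastCases (lcoeff F (K - 1)) fun j => leval (x j))

noncomputable def extendedRSCode (x : Fin q → F) (K : ℕ) : Submodule F (Fin (q + 1) → F) :=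
  (degreeLT F K).map (extEval x K)

@[simp]
lemma extEval_castSucc (x : Fin q → F) (K : ℕ) (p : F[X]) (j : Fin q) :
    extEval x K p j.castSucc = p.eval (x j) := by
  simp [extEval]

@[simp]
lemma extEval_last (x : Fin q → F) (K : ℕ) (p : F[X]) :
    extEval x K p (Fin.last q) = p.coeff (K - 1) := by
  simp [extEval]

variable [DecidableEq F]

lemma card_eval_eq_zero_le_natDegree {x : Fin q → F} (hx : Function.Injective x) {p : F[X]}
    (hp : p ≠ 0) : #{j | p.eval (x j) = 0} ≤ p.natDegree := by
  rw [← card_image_of_injective _ hx]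
  refine card_le_degree_of_subset_roots fun z hz => ?_
  obtain ⟨j, hj, rfl⟩ := mem_image.1 (mem_def.2 hz)
  exact (mem_roots hp).2 (mem_filter.1 hj).2

/-- The point at infinity only counts as a zero when `p` has degree `< K - 1`, which leaves
room for it. -/
lemma card_extEval_eq_zero_lt {x : Fin q → F} (hx : Function.Injective x) {K : ℕ} {p : F[X]}
    (hp : p ∈ degreeLT F K) (hp0 : p ≠ 0) : #{j | extEval x K p j = 0} < K := by
  have hdeg : p.natDegree < K := (natDegree_lt_iff_degree_lt hp0).2 (mem_degreeLT.1 hp)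
  have hfinite := card_eval_eq_zero_le_natDegree hx hp0
  rw [card_filter, Fin.sum_univ_castSucc]
  simp only [extEval_castSucc, extEval_last, ← card_filter]
  split_ifs with hlast
  · have : p.natDegree ≠ K - 1 := fun h =>
      hp0 (leadingCoeff_eq_zero.1 (by rwa [leadingCoeff, h]))
    omega
  · omega

lemma extendedRSCode_minDist {x : Fin q → F} (hx : Function.Injective x) {K : ℕ} :
    ∀ w ∈ extendedRSCode x K, w ≠ 0 → q + 2 - K ≤ #{j | w j ≠ 0} := by
  rintro _ ⟨p, hp, rfl⟩ hw
  have hp0 : p ≠ 0 := by rintro rfl; exact hw (map_zero _)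
  have hzeros := card_extEval_eq_zero_lt hx hp hp0
  have hsplit := card_filter_add_card_filter_not (s := univ) fun j => extEval x K p j = 0
  rw [card_univ, Fintype.card_fin] at hsplit
  change _ + #{j | extEval x K p j ≠ 0} = q + 1 at hsplit
  omega

end ExtendedReedSolomon

section UnitMemory

variable {F : Type*} [Field F] {k r n : ℕ}

noncomputable def unitMemoryGen (S : Matrix (Fin (k + r)) (Fin n) F) :
    Matrix (Fin k) (Fin n) F[X] :=
  Matrix.of fun l j => C (S (Fin.castAdd r l) j) +
    if h : (l : ℕ) < r then X * C (S (Fin.natAdd k ⟨l, h⟩) j) else 0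

variable {S : Matrix (Fin (k + r)) (Fin n) F} {e : Fin (k + r) → Fin n}

lemma unitMemoryGen_apply_castAdd (hS : ∀ m b, S m (e b) = if m = b then 1 else 0)
    (l l' : Fin k) : unitMemoryGen S l (e (Fin.castAdd r l')) = if l = l' then 1 else 0 := by
  have := l'.isLt
  simp [unitMemoryGen, hS, Fin.ext_iff]
  omega

lemma unitMemoryGen_apply_natAdd (hS : ∀ m b, S m (e b) = if m = b then 1 else 0)
    (l : Fin k) (l' : Fin r) :
    unitMemoryGen S l (e (Fin.natAdd k l')) = if (l : ℕ) = l' then X else 0 := by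
  have := l.isLt
  have := l'.isLt
  simp only [unitMemoryGen, Matrix.of_apply, hS, Fin.ext_iff, Fin.val_castAdd, Fin.val_natAdd]
  split_ifs <;> simp_all

lemma isBasic_unitMemoryGen (hS : ∀ m b, S m (e b) = if m = b then 1 else 0) :
    isBasic (unitMemoryGen S) := by
  refine ⟨Matrix.of fun j l' => if j = e (Fin.castAdd r l') then 1 else 0, ?_⟩
  ext l l'
  simp [Matrix.mul_apply, unitMemoryGen_apply_castAdd hS, Matrix.one_apply]

def unitMemoryPivots (e : Fin (k + r) → Fin n) (l : Fin k) : Fin n :=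
  if h : (l : ℕ) < r then e (Fin.natAdd k ⟨l, h⟩) else e (Fin.castAdd r l)

lemma unitMemoryGen_submatrix (hS : ∀ m b, S m (e b) = if m = b then 1 else 0) :
    (unitMemoryGen S).submatrix id (unitMemoryPivots e) =
      Matrix.diagonal fun l : Fin k => if (l : ℕ) < r then X else 1 := by
  refine Matrix.ext fun l l' => ?_
  simp only [Matrix.submatrix_apply, id, Matrix.diagonal_apply, unitMemoryPivots]
  by_cases hl' : (l' : ℕ) < r
  · rw [dif_pos hl', unitMemoryGen_apply_natAdd hS]
    rcases eq_or_ne l l' with rfl | h <;> simp [*, Fin.val_ne_iff]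
  · rw [dif_neg hl', unitMemoryGen_apply_castAdd hS]
    rcases eq_or_ne l l' with rfl | h <;> simp [*]

lemma rowDegree_unitMemoryGen (hS : ∀ m b, S m (e b) = if m = b then 1 else 0) (l : Fin k) :
    rowDegree (unitMemoryGen S) l = if (l : ℕ) < r then 1 else 0 := by
  refine le_antisymm (Finset.sup_le fun j _ => ?_) ?_
  · simp only [unitMemoryGen, Matrix.of_apply]
    split_ifs <;> compute_degree
  · split_ifs with hl
    · have hX := unitMemoryGen_apply_natAdd hS l ⟨l, hl⟩
      rw [if_pos rfl] at hX
      exact Finset.le_sup_of_le (mem_univ (e (Fin.natAdd k ⟨l, hl⟩))) (by rw [hX, natDegree_X])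
    · exact Nat.zero_le _

lemma convDegree_unitMemoryGen (hS : ∀ m b, S m (e b) = if m = b then 1 else 0) :
    convDegree (unitMemoryGen S) = min k r := by
  simp [convDegree, rowDegree_unitMemoryGen hS, Fin.card_filter_val_lt]

lemma convMemory_unitMemoryGen (hS : ∀ m b, S m (e b) = if m = b then 1 else 0)
    (hk : 0 < k) (hr : 0 < r) : convMemory (unitMemoryGen S) = 1 := by
  refine le_antisymm (Finset.sup_le fun l _ => ?_) ?_
  · rw [rowDegree_unitMemoryGen hS]
    split_ifs <;> omega
  · refine Finset.le_sup_of_le (mem_univ ⟨0, hk⟩) ?_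
    rw [rowDegree_unitMemoryGen hS, if_pos hr]

lemma isReduced_unitMemoryGen (hS : ∀ m b, S m (e b) = if m = b then 1 else 0) :
    isReduced (unitMemoryGen S) := by
  refine isReduced_of_convDegree_le_natDegree_det (isBasic_unitMemoryGen hS)
    (unitMemoryPivots e) ?_
  rw [unitMemoryGen_submatrix hS, Matrix.det_diagonal, prod_ite, prod_const, prod_const_one,
    mul_one, natDegree_X_pow, convDegree_unitMemoryGen hS, Fin.card_filter_val_lt]

lemma coeff_unitMemoryGen_mem (C : Submodule F (Fin n → F)) (hSC : ∀ m, S m ∈ C)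
    (l : Fin k) (d : ℕ) : (fun j => (unitMemoryGen S l j).coeff d) ∈ C := by
  by_cases hl : (l : ℕ) < r
  · rcases d with _ | _ | d
    all_goals simp [unitMemoryGen, hl, coeff_C]
    exacts [hSC _, hSC _, C.zero_mem]
  · rcases d with _ | d
    all_goals simp [unitMemoryGen, hl]
    exacts [hSC _, C.zero_mem]

end UnitMemory

section Lagrange

variable {F : Type*} [Field F] {q K : ℕ}

noncomputable def lagrangeRows (x : Fin q → F) (hK : K ≤ q) : Matrix (Fin K) (Fin (q + 1)) F :=
  Matrix.of fun m => extEval x K (Lagrange.basis univ (x ∘ Fin.castLE hK) m)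

lemma lagrangeRows_mem {x : Fin q → F} (hx : Function.Injective x) (hK : K ≤ q) (m : Fin K) :
    lagrangeRows x hK m ∈ extendedRSCode x K := by
  refine ⟨_, mem_degreeLT.2 ?_, rfl⟩
  rw [Lagrange.degree_basis (hx.comp (Fin.castLE_injective hK)).injOn (mem_univ m), card_univ,
    Fintype.card_fin]
  exact_mod_cast Nat.sub_lt (Fin.pos m) one_pos

lemma lagrangeRows_apply_castLE {x : Fin q → F} (hx : Function.Injective x) (hK : K ≤ q)
    (m b : Fin K) :
    lagrangeRows x hK m (Fin.castLE hK b).castSucc = if m = b then 1 else 0 := by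
  have hinj : Set.InjOn (x ∘ Fin.castLE hK) (univ : Finset (Fin K)) :=
    (hx.comp (Fin.castLE_injective hK)).injOn
  simp only [lagrangeRows, Matrix.of_apply, extEval_castSucc]
  split_ifs with h
  · subst h
    exact Lagrange.eval_basis_self hinj (mem_univ m)
  · exact Lagrange.eval_basis_of_ne (v := x ∘ Fin.castLE hK) h (mem_univ b)

end Lagrange

theorem convolutional_even_dual_general (q n a : ℕ)
    (hn : n = q + 1) (ha : a = q / 2) (i : ℕ) (hi1 : 1 ≤ i) (hi2 : i ≤ a - 1)
    (F : Type*) [Field F] [Fintype F] [DecidableEq F] (hF : Fintype.card F = q) :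
    ∃ G : Matrix (Fin (2 * i)) (Fin n) (Polynomial F),
      isReduced G ∧
      convDegree G = 2 ∧
      convMemory G = 1 ∧
      (∀ v ∈ convCode G, v ≠ 0 → n - 2 * i - 1 ≤ polyWeight v) := by
  subst hn
  have hK : 2 * i + 2 ≤ q := by omega
  let x : Fin q ≃ F := (Fintype.equivFinOfCardEq hF).symm
  have hS := lagrangeRows_apply_castLE x.injective hK
  refine ⟨unitMemoryGen (lagrangeRows x hK), isReduced_unitMemoryGen hS, ?_,
    convMemory_unitMemoryGen hS (by omega) (by omega), fun v hv hv0 => ?_⟩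
  · rw [convDegree_unitMemoryGen hS]
    omega
  · have := le_polyWeight_of_coeff_mem _ (extendedRSCode_minDist x.injective)
      (coeff_unitMemoryGen_mem _ (lagrangeRows_mem x.injective hK)) hv hv0
    omega

theorem convolutional_even_dual (t q n a : ℕ) (ht : 3 ≤ t) (hq : q = 2 ^ t)
    (hn : n = q + 1) (ha : a = q / 2) (i : ℕ) (hi1 : 1 ≤ i) (hi2 : i ≤ a - 1)
    (F : Type*) [Field F] [Fintype F] [DecidableEq F] (hF : Fintype.card F = q) :
    ∃ G : Matrix (Fin (2 * i)) (Fin n) (Polynomial F),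
      isReduced G ∧
      convDegree G = 2 ∧
      convMemory G = 1 ∧
      (∀ v ∈ convCode G, v ≠ 0 → n - 2 * i - 1 ≤ polyWeight v) :=
  convolutional_even_dual_general q n a hn ha i hi1 hi2 F hF
end

section
/- Let q = p^t with p an odd prime and t ≥ 2, n = q+1, and a = n/2. For each 2 ≤ i ≤ a−1, there exists an MDS convolutional code over F_q with parameters (n, n−2i+1, 2; 1, 2i+2), i.e., its free distance 2i+2 equals the generalized Singleton bound (n−k)(⌊γ/k⌋+1)+γ+1 with k = n−2i+1 and γ = 2. -/
/-!
Let `q = |F|` and `d = q - 1 - 2i`, so that `k = d + 3`. The generator matrix is `G = [M·V | g∞]`,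
with `V` the Vandermonde matrix of `1, x, …, x^(d+2)` over the points `x ∈ F` and `M` the identity
with the block `[[1, D], [D, 1]]` on the two memory rows. The `D^j`-coefficient of `u·G` at `x` is
the value at `x` of a polynomial of degree `≤ d + 2` built from `u·M`, so each nonzero such
polynomial contributes at least `q - d - 2` nonzero entries. If the memory rows are not used, `u·G`
lies in a doubly extended Reed–Solomon code and has weight `≥ q + 1 - d`; otherwise the lowest
`D`-degree of `u` and one more than the top degree of its memory part give two such polynomials,
of total weight `≥ 2 (q - d - 2) ≥ q + 1 - d`. Evaluating `∏_{z ∈ Z} (X - z)` with `|Z| = d`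
attains `q + 1 - d = 2i + 2`.

By the power sums `∑ₓ x^N = -[N = q - 1]` (`N < 2 (q - 1)`), the dual Vandermonde matrix
`(x^(q-1-s))` inverts `V` up to sign, which yields a polynomial right inverse of `G`. Finally `G` is
reduced: a basic generator matrix of the same code with degree `≤ 1` would have `d + 2` constant
rows, linearly independent over `F`, inside the `(d + 1)`-dimensional space of constant codewords.
-/

open Polynomial Finset Matrix

noncomputable section

section General

variable {F : Type*} [Field F]

theorem mem_convCode_iff {k n : ℕ} {G : Matrix (Fin k) (Fin n) F[X]} {v : Fin n → F[X]} :
    v ∈ convCode G ↔ ∃ u, u ᵥ* G = v := by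
  simp only [convCode, Set.mem_ofPred_eq, funext_iff, vecMul, dotProduct, eq_comm]

theorem rowDegree_eq_zero_iff {k n : ℕ} {G : Matrix (Fin k) (Fin n) F[X]} {i : Fin k} :
    rowDegree G i = 0 ↔ ∀ j, (G i j).natDegree = 0 := by
  rw [rowDegree, ← Nat.bot_eq_zero, Finset.sup_eq_bot_iff]; simp

theorem isBasic.vecMul_submatrix_injective {k n m : ℕ} {G : Matrix (Fin k) (Fin n) F[X]}
    (hG : isBasic G) {σ : Fin m → Fin k} (hσ : Function.Injective σ) :
    Function.Injective fun c : Fin m → F[X] => c ᵥ* G.submatrix σ id := by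
  obtain ⟨R, hR⟩ := hG
  have hσR : G.submatrix σ id * R.submatrix id σ = 1 := by
    rw [← submatrix_mul _ _ _ _ _ Function.bijective_id, hR, submatrix_one _ hσ]
  intro c c' h
  simpa [vecMul_vecMul, hσR] using congrArg (· ᵥ* R.submatrix id σ) h

theorem row_mem_convCode {k n : ℕ} (G : Matrix (Fin k) (Fin n) F[X]) (i : Fin k) :
    G i ∈ convCode G :=
  mem_convCode_iff.2 ⟨Pi.single i 1, single_one_vecMul i G⟩

-- Multiplying by a right inverse of `G` shows that these rows are linearly independent over `F`.
theorem isBasic.card_le_of_rows_eq_vecMul {k n l m : ℕ} {G : Matrix (Fin k) (Fin n) F[X]}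
    (hG : isBasic G) (G₀ : Matrix (Fin l) (Fin n) F[X]) {σ : Fin m → Fin k}
    (hσ : Function.Injective σ) (c : Fin m → Fin l → F) (hc : ∀ t, G (σ t) = (C ∘ c t) ᵥ* G₀) :
    m ≤ l := by
  have hfactor : ∀ a : Fin m → F,
      (C ∘ a) ᵥ* G.submatrix σ id = (C ∘ (a ᵥ* of c)) ᵥ* G₀ := fun a => by
    have hG₀ : G.submatrix σ id = (of c).map C * G₀ := by
      ext t j : 1
      simp [hc, vecMul, mul_apply, dotProduct]
    ext j : 1
    rw [hG₀, ← vecMul_vecMul]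
    congr 1
    ext i : 1
    exact (RingHom.map_vecMul C (of c) a i).symm
  have hinj : Function.Injective (vecMulLinear (of c)) := by
    refine Function.Injective.of_comp (f := fun b : Fin l → F => (C ∘ b) ᵥ* G₀) ?_
    intro a a' h
    have h' : (C ∘ a) ᵥ* G.submatrix σ id = (C ∘ a') ᵥ* G.submatrix σ id := by
      simpa [hfactor] using h
    exact funext fun t => C_injective (congrFun (hG.vecMul_submatrix_injective hσ h') t)
  simpa using LinearMap.finrank_le_finrank_of_injective hinj

end General

section Weight

variable {F : Type*} [Field F] [DecidableEq F] {n : ℕ}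

def coeffWeight (v : Fin n → F[X]) (j : ℕ) : ℕ := #{c | (v c).coeff j ≠ 0}

theorem sum_coeffWeight_le_polyWeight (v : Fin n → F[X]) (J : Finset ℕ) :
    ∑ j ∈ J, coeffWeight v j ≤ polyWeight v := by
  calc ∑ j ∈ J, coeffWeight v j = ∑ c, #{j ∈ J | (v c).coeff j ≠ 0} := by
        simp only [coeffWeight, card_filter]; exact sum_comm
    _ ≤ polyWeight v := sum_le_sum fun c _ => card_le_card fun j hj => by
        simpa using (mem_filter.1 hj).2

theorem card_support_C (a : F) : #(C a).support = if a ≠ 0 then 1 else 0 := by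
  by_cases h : a = 0 <;> simp [h, support_C]

end Weight

section FiniteField

variable {F : Type*} [Field F] [Fintype F]

theorem sum_pow_eq_ite {N : ℕ} (hN : N < 2 * (Fintype.card F - 1)) :
    ∑ x : F, x ^ N = if N = Fintype.card F - 1 then -1 else 0 := by
  classical
  set q := Fintype.card F
  have hq : 1 < q := Fintype.one_lt_card
  rcases lt_or_ge N (q - 1) with h | h
  · rw [if_neg h.ne, FiniteField.sum_pow_lt_card_sub_one F N h]
  obtain ⟨M, rfl⟩ := Nat.exists_eq_add_of_le h
  have hpow : ∀ x : F, x ^ (q - 1 + M) = x ^ M - if x = 0 then 0 ^ M else 0 := by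
    intro x
    by_cases hx : x = 0
    · simp [hx, zero_pow (show q - 1 + M ≠ 0 by omega)]
    · rw [pow_add, FiniteField.pow_card_sub_one_eq_one x hx, one_mul, if_neg hx, sub_zero]
  simp only [hpow, Finset.sum_sub_distrib, Finset.sum_ite_eq', Finset.mem_univ, if_true]
  rcases Nat.eq_zero_or_pos M with rfl | hM
  · simp [q]
  · rw [FiniteField.sum_pow_lt_card_sub_one F M (by omega), zero_pow hM.ne', if_neg (by omega),
      sub_zero]

variable [DecidableEq F]

theorem card_sub_natDegree_le_card_eval_ne_zero {Q : F[X]} (hQ : Q ≠ 0) :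
    Fintype.card F - Q.natDegree ≤ #{x | Q.eval x ≠ 0} := by
  have hroots : #{x | Q.eval x = 0} ≤ Q.natDegree :=
    card_le_degree_of_subset_roots fun x hx => by simpa [mem_roots hQ] using hx
  have := card_filter_add_card_filter_not (s := univ) (fun x : F => Q.eval x = 0)
  rw [card_univ] at this
  simp only [ne_eq]
  omega

theorem card_add_one_le_of_natDegree_le {Q : F[X]} (hQ : Q ≠ 0) {d : ℕ}
    (hd : Q.natDegree ≤ d) :
    Fintype.card F + 1 ≤ d + #{x | Q.eval x ≠ 0} + if Q.coeff d = 0 then 0 else 1 := by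
  have hcard := card_sub_natDegree_le_card_eval_ne_zero hQ
  split_ifs with h
  · have : Q.natDegree ≠ d := fun he => hQ (leadingCoeff_eq_zero.1 (by rwa [leadingCoeff, he]))
    omega
  · omega

end FiniteField

section CoeffPoly

variable {F : Type*} [Field F]

theorem exists_coeff_ne_zero_and_coeff_succ_ne_zero {p r : F[X]} (h : p ≠ 0 ∨ r ≠ 0) :
    ∃ j, (p.coeff j ≠ 0 ∨ r.coeff j ≠ 0) ∧
      ((p + X * r).coeff (j + 1) ≠ 0 ∨ (r + X * p).coeff (j + 1) ≠ 0) := by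
  have top : ∀ a b : F[X], b ≠ 0 → a.natDegree ≤ b.natDegree →
      (a + X * b).coeff (b.natDegree + 1) ≠ 0 := fun a b hb hab => by
    rwa [coeff_add, coeff_X_mul, coeff_eq_zero_of_natDegree_lt (by omega), zero_add,
      coeff_natDegree, Ne, leadingCoeff_eq_zero]
  have lead : ∀ b : F[X], b ≠ 0 → b.coeff b.natDegree ≠ 0 := fun b hb => by
    rwa [coeff_natDegree, Ne, leadingCoeff_eq_zero]
  by_cases hp : p = 0
  · have hr := h.resolve_left (not_not.2 hp)
    exact ⟨r.natDegree, .inr (lead r hr), .inl (hp ▸ top 0 r hr (by simp))⟩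
  by_cases hr : r = 0
  · exact ⟨p.natDegree, .inl (lead p hp), .inr (hr ▸ top 0 p hp (by simp))⟩
  rcases le_total p.natDegree r.natDegree with hle | hle
  · exact ⟨r.natDegree, .inr (lead r hr), .inl (top p r hr hle)⟩
  · exact ⟨p.natDegree, .inl (lead p hp), .inr (top r p hp hle)⟩

def powCol (n : ℕ) (x : F) : Fin n → F[X] := fun m => C (x ^ (m : ℕ))

def coeffPoly {n : ℕ} (w : Fin n → F[X]) (j : ℕ) : F[X] := ∑ m, C ((w m).coeff j) * X ^ (m : ℕ)

variable {n : ℕ}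

theorem coeff_dotProduct_powCol (w : Fin n → F[X]) (x : F) (j : ℕ) :
    (w ⬝ᵥ powCol n x).coeff j = (coeffPoly w j).eval x := by
  simp only [dotProduct, powCol, coeffPoly, finsetSum_coeff, coeff_mul_C, eval_finsetSum,
    eval_mul, eval_C, eval_pow, eval_X]

theorem coeff_coeffPoly (w : Fin n → F[X]) (j : ℕ) (m : Fin n) :
    (coeffPoly w j).coeff m = (w m).coeff j := by
  simp [coeffPoly, coeff_X_pow, Fin.val_inj]

theorem coeffPoly_ne_zero {w : Fin n → F[X]} {j : ℕ} {m : Fin n} (h : (w m).coeff j ≠ 0) :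
    coeffPoly w j ≠ 0 :=
  fun h0 => h (by rw [← coeff_coeffPoly, h0, coeff_zero])

theorem natDegree_coeffPoly_le (w : Fin (n + 1) → F[X]) (j : ℕ) :
    (coeffPoly w j).natDegree ≤ n :=
  natDegree_sum_le_of_forall_le _ _ fun m _ =>
    (natDegree_C_mul_X_pow_le _ _).trans (Nat.lt_succ_iff.1 m.isLt)

theorem coeffPoly_eq_of_last_two_eq_zero {w : Fin (n + 2) → F[X]}
    (h₁ : w (Fin.last n).castSucc = 0) (h₂ : w (Fin.last (n + 1)) = 0) (j : ℕ) :
    coeffPoly w j = coeffPoly (fun m : Fin n => w m.castSucc.castSucc) j := by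
  simp [coeffPoly, Fin.sum_univ_castSucc, h₁, h₂]

end CoeffPoly

section Columns

variable {F : Type*} [Fintype F]

def affineCol (x : F) : Fin (Fintype.card F + 1) := (Fintype.equivFin F x).castSucc

theorem sum_fin_card_succ {M : Type*} [AddCommMonoid M] (f : Fin (Fintype.card F + 1) → M) :
    ∑ j, f j = ∑ x, f (affineCol x) + f (Fin.last _) := by
  rw [Fin.sum_univ_castSucc, ← (Fintype.equivFin F).sum_comp]
  rfl

theorem forall_fin_card_succ {P : Fin (Fintype.card F + 1) → Prop} :
    (∀ j, P j) ↔ (∀ x, P (affineCol x)) ∧ P (Fin.last _) := by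
  rw [Fin.forall_fin_succ', (Fintype.equivFin F).forall_congr_left]
  simp [affineCol]

theorem mul_eq_add_vecMulVec {ι κ α : Type*} [Fintype κ] [NonUnitalNonAssocSemiring α]
    (A : Matrix ι (Fin (Fintype.card F + 1)) α) (B : Matrix (Fin (Fintype.card F + 1)) κ α) :
    A * B = A.submatrix id affineCol * B.submatrix affineCol id +
      vecMulVec (fun i => A i (Fin.last _)) (B (Fin.last _)) := by
  ext i k
  simp [mul_apply, sum_fin_card_succ, vecMulVec_apply]

end Columns

section Code

variable {F : Type*} [Field F] (d : ℕ)

abbrev rowTop : Fin (d + 3) := (Fin.last d).castSucc.castSucc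
abbrev rowA : Fin (d + 3) := (Fin.last (d + 1)).castSucc
abbrev rowB : Fin (d + 3) := Fin.last (d + 2)

def mixMatrix : Matrix (Fin (d + 3)) (Fin (d + 3)) F[X] :=
  1 + (X : F[X]) • (single (rowA d) (rowB d) 1 + single (rowB d) (rowA d) 1)

variable {d}

theorem rowA_ne_rowB : rowA d ≠ rowB d := (Fin.castSucc_lt_last _).ne

@[simp] theorem mulVec_mixMatrix_castSucc (w : Fin (d + 3) → F[X]) (m : Fin (d + 1)) :
    (mixMatrix d *ᵥ w) m.castSucc.castSucc = w m.castSucc.castSucc := by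
  simp [mixMatrix, add_mulVec, single_mulVec]

@[simp] theorem mulVec_mixMatrix_rowA (w : Fin (d + 3) → F[X]) :
    (mixMatrix d *ᵥ w) (rowA d) = w (rowA d) + X * w (rowB d) := by
  simp [mixMatrix, add_mulVec, single_mulVec]

@[simp] theorem mulVec_mixMatrix_rowB (w : Fin (d + 3) → F[X]) :
    (mixMatrix d *ᵥ w) (rowB d) = w (rowB d) + X * w (rowA d) := by
  simp [mixMatrix, add_mulVec, single_mulVec, rowA_ne_rowB.symm]

theorem mixMatrix_transpose : (mixMatrix d)ᵀ = (mixMatrix d : Matrix _ _ F[X]) := by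
  simp [mixMatrix, add_comm]

theorem mixMatrix_mulVec_eq_self {u : Fin (d + 3) → F[X]} (hA : u (rowA d) = 0)
    (hB : u (rowB d) = 0) : mixMatrix d *ᵥ u = u := by
  funext r
  induction r using Fin.lastCases with
  | last => simp [hA, hB]
  | cast r =>
    induction r using Fin.lastCases with
    | last => simp [hA, hB]
    | cast m => simp

-- `j₁` is the lowest `D`-degree in `u`, `j₂` one more than the top degree of its memory entries.
theorem exists_lt_coeffPoly_ne_zero {u : Fin (d + 3) → F[X]}
    (h : u (rowA d) ≠ 0 ∨ u (rowB d) ≠ 0) :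
    ∃ j₁ j₂, j₁ < j₂ ∧ coeffPoly (mixMatrix d *ᵥ u) j₁ ≠ 0 ∧
      coeffPoly (mixMatrix d *ᵥ u) j₂ ≠ 0 := by
  classical
  obtain ⟨j, hj, hj'⟩ := exists_coeff_ne_zero_and_coeff_succ_ne_zero h
  have hex : ∃ i r, (u r).coeff i ≠ 0 := hj.elim (⟨j, _, ·⟩) (⟨j, _, ·⟩)
  refine ⟨Nat.find hex, j + 1, Nat.lt_succ_of_le (Nat.find_min' hex ?_), ?_, ?_⟩
  · exact hj.elim (⟨_, ·⟩) (⟨_, ·⟩)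
  · obtain ⟨r, hr⟩ := Nat.find_spec hex
    have hlow : ∀ s, (X * u s).coeff (Nat.find hex) = 0 := fun s => by
      rcases hi : Nat.find hex with _ | i
      · exact coeff_X_mul_zero _
      · rw [coeff_X_mul]
        by_contra hs
        exact Nat.find_min hex (hi ▸ Nat.lt_succ_self i) ⟨s, hs⟩
    refine coeffPoly_ne_zero (m := r) ?_
    induction r using Fin.lastCases with
    | last => simpa [coeff_add, hlow] using hr
    | cast r =>
      induction r using Fin.lastCases with
      | last => simpa [coeff_add, hlow] using hr
      | cast m => simpa using hr
  · rcases hj' with h' | h'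
    · exact coeffPoly_ne_zero (m := rowA d) (by simpa using h')
    · exact coeffPoly_ne_zero (m := rowB d) (by simpa using h')

theorem row_cases (r : Fin (d + 3)) :
    (∃ m : Fin d, r = m.castSucc.castSucc.castSucc) ∨ r = rowTop d ∨ r = rowA d ∨ r = rowB d := by
  induction r using Fin.lastCases with
  | last => simp
  | cast r =>
    induction r using Fin.lastCases with
    | last => simp
    | cast r =>
      induction r using Fin.lastCases with
      | last => simp
      | cast m => exact .inl ⟨m, rfl⟩

variable (d) [Fintype F]

def infCol : Fin (d + 3) → F[X] := Pi.single (rowTop d) 1 + Pi.single (rowA d) 1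

variable (F)

/-- Columns are indexed by the points of `F` (via `affineCol`) and the point at infinity (the last
column). Row `m ≤ d` evaluates `x ^ m`, rows `d + 1` and `d + 2` evaluate `x^(d+1) + D x^(d+2)` and
`x^(d+2) + D x^(d+1)`; at infinity, rows `d` and `d + 1` have entry `1` and the others `0`. -/
def genMatrix : Matrix (Fin (d + 3)) (Fin (Fintype.card F + 1)) F[X] :=
  Matrix.of fun r => Fin.snoc (α := fun _ => F[X])
    (fun j => (mixMatrix d *ᵥ powCol (d + 3) ((Fintype.equivFin F).symm j)) r) (infCol d r)

variable {F d}

@[simp] theorem genMatrix_affineCol (r : Fin (d + 3)) (x : F) :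
    genMatrix F d r (affineCol x) = (mixMatrix d *ᵥ powCol (d + 3) x) r := by
  simp [genMatrix, affineCol]

@[simp] theorem genMatrix_last (r : Fin (d + 3)) :
    genMatrix F d r (Fin.last _) = infCol d r := by
  simp [genMatrix]

theorem vecMul_genMatrix_affineCol (u : Fin (d + 3) → F[X]) (x : F) :
    (u ᵥ* genMatrix F d) (affineCol x) = (mixMatrix d *ᵥ u) ⬝ᵥ powCol (d + 3) x := by
  rw [← vecMul_transpose, mixMatrix_transpose, ← dotProduct_mulVec]
  simp [vecMul, dotProduct]

theorem vecMul_genMatrix_last (u : Fin (d + 3) → F[X]) :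
    (u ᵥ* genMatrix F d) (Fin.last _) = u (rowTop d) + u (rowA d) := by
  simp [vecMul, infCol, dotProduct, Pi.single_apply, mul_add, sum_add_distrib]

end Code

section Distance

variable {F : Type*} [Field F] [Fintype F] [DecidableEq F] {d : ℕ}

theorem coeffWeight_eq (v : Fin (Fintype.card F + 1) → F[X]) (j : ℕ) :
    coeffWeight v j =
      #{x | (v (affineCol x)).coeff j ≠ 0} + if (v (Fin.last _)).coeff j ≠ 0 then 1 else 0 := by
  simp only [coeffWeight, card_filter]
  exact sum_fin_card_succ _

theorem coeffWeight_vecMul_genMatrix (u : Fin (d + 3) → F[X]) (j : ℕ) :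
    coeffWeight (u ᵥ* genMatrix F d) j =
      #{x | (coeffPoly (mixMatrix d *ᵥ u) j).eval x ≠ 0} +
        if ((u ᵥ* genMatrix F d) (Fin.last _)).coeff j ≠ 0 then 1 else 0 := by
  simp only [coeffWeight_eq, vecMul_genMatrix_affineCol, coeff_dotProduct_powCol]

theorem card_sub_le_coeffWeight {u : Fin (d + 3) → F[X]} {j : ℕ}
    (h : coeffPoly (mixMatrix d *ᵥ u) j ≠ 0) :
    Fintype.card F - (d + 2) ≤ coeffWeight (u ᵥ* genMatrix F d) j := by
  have := card_sub_natDegree_le_card_eval_ne_zero h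
  have := natDegree_coeffPoly_le (mixMatrix d *ᵥ u) j
  rw [coeffWeight_vecMul_genMatrix]
  omega

theorem two_mul_card_sub_le_polyWeight {u : Fin (d + 3) → F[X]}
    (h : u (rowA d) ≠ 0 ∨ u (rowB d) ≠ 0) :
    2 * (Fintype.card F - (d + 2)) ≤ polyWeight (u ᵥ* genMatrix F d) := by
  obtain ⟨j₁, j₂, hlt, h₁, h₂⟩ := exists_lt_coeffPoly_ne_zero h
  calc 2 * (Fintype.card F - (d + 2))
      ≤ coeffWeight (u ᵥ* genMatrix F d) j₁ + coeffWeight (u ᵥ* genMatrix F d) j₂ := by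
        linarith [card_sub_le_coeffWeight h₁, card_sub_le_coeffWeight h₂]
    _ = ∑ j ∈ {j₁, j₂}, coeffWeight (u ᵥ* genMatrix F d) j := (sum_pair hlt.ne).symm
    _ ≤ polyWeight (u ᵥ* genMatrix F d) := sum_coeffWeight_le_polyWeight _ _

theorem card_add_one_le_add_polyWeight {u : Fin (d + 3) → F[X]} (hu : u ≠ 0)
    (hA : u (rowA d) = 0) (hB : u (rowB d) = 0) :
    Fintype.card F + 1 ≤ d + polyWeight (u ᵥ* genMatrix F d) := by
  obtain ⟨r, hr⟩ := Function.ne_iff.1 hu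
  obtain ⟨j, hj⟩ : ∃ j, (u r).coeff j ≠ 0 := ⟨_, mt leadingCoeff_eq_zero.1 hr⟩
  have hQ : coeffPoly u j ≠ 0 := coeffPoly_ne_zero hj
  have hdeg : (coeffPoly u j).natDegree ≤ d := by
    rw [coeffPoly_eq_of_last_two_eq_zero hA hB]
    exact natDegree_coeffPoly_le _ _
  have hinf : ((u ᵥ* genMatrix F d) (Fin.last _)).coeff j = (coeffPoly u j).coeff d := by
    simpa [vecMul_genMatrix_last, hA] using (coeff_coeffPoly u j (rowTop d)).symm
  calc Fintype.card F + 1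
      ≤ d + #{x | (coeffPoly u j).eval x ≠ 0} + if (coeffPoly u j).coeff d = 0 then 0 else 1 :=
        card_add_one_le_of_natDegree_le hQ hdeg
    _ = d + coeffWeight (u ᵥ* genMatrix F d) j := by
        rw [coeffWeight_vecMul_genMatrix, mixMatrix_mulVec_eq_self hA hB, hinf, add_assoc]
        simp only [ne_eq, ite_not]
    _ ≤ d + polyWeight (u ᵥ* genMatrix F d) := by
        simpa using sum_coeffWeight_le_polyWeight (u ᵥ* genMatrix F d) {j}

theorem card_add_one_sub_le_polyWeight (hq : d + 5 ≤ Fintype.card F)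
    {v : Fin (Fintype.card F + 1) → F[X]} (hv : v ∈ convCode (genMatrix F d)) (hv0 : v ≠ 0) :
    Fintype.card F + 1 - d ≤ polyWeight v := by
  obtain ⟨u, rfl⟩ := mem_convCode_iff.1 hv
  by_cases h : u (rowA d) = 0 ∧ u (rowB d) = 0
  · have hu : u ≠ 0 := by rintro rfl; exact hv0 (zero_vecMul _)
    have := card_add_one_le_add_polyWeight hu h.1 h.2
    omega
  · have := two_mul_card_sub_le_polyWeight (not_and_or.1 h)
    omega

end Distance

section Degree

variable {F : Type*} [Field F] [Fintype F] {d : ℕ}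

theorem rowDegree_genMatrix_castSucc (m : Fin (d + 1)) :
    rowDegree (genMatrix F d) m.castSucc.castSucc = 0 := by
  rw [rowDegree_eq_zero_iff, forall_fin_card_succ]
  simp [powCol, infCol, Pi.single_apply, apply_ite natDegree]

theorem rowDegree_genMatrix_eq_one {r : Fin (d + 3)} (hr : r = rowA d ∨ r = rowB d) :
    rowDegree (genMatrix F d) r = 1 := by
  refine le_antisymm (Finset.sup_le fun j _ => ?_)
    (Finset.le_sup_of_le (mem_univ (affineCol 1)) ?_)
  · revert j
    rw [forall_fin_card_succ]
    rcases hr with rfl | rfl <;> simp [powCol, infCol] <;> intro x <;> compute_degree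
  · have : (1 + X : F[X]).natDegree = 1 := by rw [add_comm, ← C_1, natDegree_X_add_C]
    rcases hr with rfl | rfl <;> simp [powCol, this]

theorem convDegree_genMatrix : convDegree (genMatrix F d) = 2 := by
  rw [convDegree, Fin.sum_univ_castSucc, Fin.sum_univ_castSucc]
  simp only [rowDegree_genMatrix_castSucc, sum_const_zero]
  rw [rowDegree_genMatrix_eq_one (.inl rfl), rowDegree_genMatrix_eq_one (.inr rfl)]

theorem convMemory_genMatrix : convMemory (genMatrix F d) = 1 := by
  refine le_antisymm (Finset.sup_le fun r _ => ?_)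
    (Finset.le_sup_of_le (mem_univ (rowB d)) (rowDegree_genMatrix_eq_one (.inr rfl)).ge)
  rcases row_cases r with ⟨m, rfl⟩ | rfl | rfl | rfl
  · exact (rowDegree_genMatrix_castSucc m.castSucc).le.trans zero_le_one
  · exact (rowDegree_genMatrix_castSucc (Fin.last d)).le.trans zero_le_one
  · exact (rowDegree_genMatrix_eq_one (.inl rfl)).le
  · exact (rowDegree_genMatrix_eq_one (.inr rfl)).le

end Degree

section MinimumWeight

variable {F : Type*} [Field F] [Fintype F] {d : ℕ}

variable (d) in
def coeffVec (Q : F[X]) : Fin (d + 3) → F[X] :=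
  Fin.snoc (Fin.snoc (fun m : Fin (d + 1) => C (Q.coeff m)) 0) 0

theorem vecMul_coeffVec_affineCol {Q : F[X]} (hQ : Q.natDegree ≤ d) (x : F) :
    (coeffVec d Q ᵥ* genMatrix F d) (affineCol x) = C (Q.eval x) := by
  rw [vecMul_genMatrix_affineCol,
    mixMatrix_mulVec_eq_self (by simp [coeffVec]) (by simp [coeffVec]),
    eval_eq_sum_range' (Nat.lt_succ_of_le hQ), map_sum, ← Fin.sum_univ_eq_sum_range]
  simp [coeffVec, dotProduct, powCol, Fin.sum_univ_castSucc]

theorem vecMul_coeffVec_last (Q : F[X]) :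
    (coeffVec d Q ᵥ* genMatrix F d) (Fin.last _) = C (Q.coeff d) := by
  simp [vecMul_genMatrix_last, coeffVec]

variable [DecidableEq F]

theorem exists_polyWeight_eq (hd : d ≤ Fintype.card F) :
    ∃ v ∈ convCode (genMatrix F d), v ≠ 0 ∧ polyWeight v = Fintype.card F + 1 - d := by
  obtain ⟨Z, -, hZ⟩ := exists_subset_card_eq (s := (univ : Finset F)) (by simpa using hd)
  set Q := ∏ z ∈ Z, (X - C z)
  have hQ : Q.natDegree = d := by simp [Q, hZ]
  have hlast : (coeffVec d Q ᵥ* genMatrix F d) (Fin.last _) = 1 := by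
    have hmonic : Q.Monic := monic_prod_of_monic _ _ fun z _ => monic_X_sub_C z
    rw [vecMul_coeffVec_last, ← hQ, hmonic.coeff_natDegree, map_one]
  have hroots : #{x | Q.eval x ≠ 0} = Fintype.card F - d := by
    have : filter (fun x => Q.eval x ≠ 0) univ = univ \ Z := by
      ext x; simp [Q, eval_prod, prod_eq_zero_iff, sub_eq_zero]
    rw [this, card_sdiff_of_subset (subset_univ _), card_univ, hZ]
  refine ⟨coeffVec d Q ᵥ* genMatrix F d, mem_convCode_iff.2 ⟨_, rfl⟩,
    fun h => one_ne_zero (hlast.symm.trans (congrFun h _)), ?_⟩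
  rw [polyWeight, sum_fin_card_succ, hlast, ← map_one C]
  simp only [vecMul_coeffVec_affineCol hQ.le, card_support_C, ← card_filter, hroots, ne_eq,
    one_ne_zero, not_false_eq_true, if_true]
  omega

end MinimumWeight

section Basic

variable {F : Type*} [Field F] (d : ℕ)

def dualCoeffMatrix : Matrix (Fin (d + 3)) (Fin (d + 3)) F[X] :=
  1 - single (rowA d) (rowA d) 1 - single (rowTop d) (rowA d) 1 +
    (X : F[X]) • single (rowTop d) (rowB d) 1

def infRow : Fin (d + 3) → F[X] := Pi.single (rowA d) 1 - (X : F[X]) • Pi.single (rowB d) 1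

theorem mixMatrix_mul_dualCoeffMatrix_add :
    mixMatrix d * dualCoeffMatrix d + vecMulVec (infCol d) (infRow d) = (1 : Matrix _ _ F[X]) := by
  refine Matrix.ext fun r c => ?_
  rcases row_cases r with ⟨m, rfl⟩ | rfl | rfl | rfl <;>
  rcases row_cases c with ⟨m', rfl⟩ | rfl | rfl | rfl <;>
  simp [mixMatrix, dualCoeffMatrix, infCol, infRow, one_apply,
    vecMulVec_apply, add_mul, mul_add, mul_sub, (Fin.castSucc_ne_last _).symm]

variable (F) [Fintype F]

def powMatrix : Matrix (Fin (d + 3)) F F[X] := of fun m x => C (x ^ (m : ℕ))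

def dualPowMatrix : Matrix F (Fin (d + 3)) F[X] := of fun x s => C (x ^ (Fintype.card F - 1 - s))

def rightInverse : Matrix (Fin (Fintype.card F + 1)) (Fin (d + 3)) F[X] :=
  of fun j => Fin.snoc (α := fun _ => Fin (d + 3) → F[X])
    (fun j => (-(dualPowMatrix F d * (dualCoeffMatrix d : Matrix _ _ F[X])))
      ((Fintype.equivFin F).symm j)) (infRow d) j

variable {F d}

theorem powMatrix_mul_dualPowMatrix (hq : d + 4 ≤ Fintype.card F) :
    powMatrix F d * dualPowMatrix F d = -1 := by
  refine Matrix.ext fun m s => ?_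
  simp only [powMatrix, dualPowMatrix, mul_apply, of_apply, ← C_mul, ← pow_add, ← map_sum]
  rw [sum_pow_eq_ite (by omega)]
  have := m.isLt
  have := s.isLt
  by_cases h : m = s
  · simp [h, Nat.add_sub_cancel' (by omega : (s : ℕ) ≤ Fintype.card F - 1)]
  · rw [if_neg (by omega), neg_apply, one_apply_ne h]
    simp

theorem genMatrix_submatrix_affineCol :
    (genMatrix F d).submatrix id affineCol =
      (mixMatrix d : Matrix _ _ F[X]) * powMatrix F d := by
  ext r x : 1
  simp only [submatrix_apply, id, genMatrix_affineCol, mulVec, dotProduct, mul_apply, powMatrix,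
    powCol, of_apply]

theorem rightInverse_submatrix_affineCol :
    (rightInverse F d).submatrix affineCol id =
      -(dualPowMatrix F d * (dualCoeffMatrix d : Matrix _ _ F[X])) := by
  ext x c : 1
  simp [rightInverse, affineCol]

/-- `G = [M·V | g∞]` and `R = [-(W·K) ; r∞]` with `V·W = -1` by power sums, so
`G·R = M·K + g∞·r∞`. -/
theorem genMatrix_mul_rightInverse (hq : d + 4 ≤ Fintype.card F) :
    genMatrix F d * rightInverse F d = 1 := by
  have hlast : (fun r => genMatrix F d r (Fin.last _)) = infCol d := funext genMatrix_last
  have hlast' : rightInverse F d (Fin.last _) = infRow d := funext fun c => by simp [rightInverse]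
  rw [mul_eq_add_vecMulVec, genMatrix_submatrix_affineCol, rightInverse_submatrix_affineCol, hlast,
    hlast', Matrix.mul_neg, ← Matrix.mul_assoc, Matrix.mul_assoc (mixMatrix d),
    powMatrix_mul_dualPowMatrix hq, Matrix.mul_neg, Matrix.mul_one, Matrix.neg_mul, neg_neg]
  exact mixMatrix_mul_dualCoeffMatrix_add d

end Basic

section Reduced

variable {F : Type*} [Field F] [Fintype F] {d : ℕ}

variable (F d) in
abbrev rsMatrix : Matrix (Fin (d + 1)) (Fin (Fintype.card F + 1)) F[X] :=
  (genMatrix F d).submatrix (fun m => m.castSucc.castSucc) id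

theorem exists_eq_vecMul_rsMatrix (hq : d + 3 ≤ Fintype.card F)
    {v : Fin (Fintype.card F + 1) → F[X]} (hv : v ∈ convCode (genMatrix F d))
    (hconst : ∀ j, (v j).natDegree = 0) :
    ∃ c : Fin (d + 1) → F, v = (C ∘ c) ᵥ* rsMatrix F d := by
  obtain ⟨u, rfl⟩ := mem_convCode_iff.1 hv
  have hcoeff : ∀ j, 1 ≤ j → ∀ r, ((mixMatrix d *ᵥ u) r).coeff j = 0 := by
    intro j hj r
    have h0 : coeffPoly (mixMatrix d *ᵥ u) j = 0 := by
      refine eq_zero_of_natDegree_lt_card_of_eval_eq_zero _ Function.injective_id (fun x => ?_)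
        ((natDegree_coeffPoly_le _ j).trans_lt (by omega))
      rw [id, ← coeff_dotProduct_powCol, ← vecMul_genMatrix_affineCol]
      exact coeff_eq_zero_of_natDegree_lt (by rw [hconst]; omega)
    rw [← coeff_coeffPoly, h0, coeff_zero]
  have hAB : u (rowA d) = 0 ∧ u (rowB d) = 0 := by
    by_contra h
    obtain ⟨j, -, hj⟩ := exists_coeff_ne_zero_and_coeff_succ_ne_zero (not_and_or.1 h)
    rw [← mulVec_mixMatrix_rowA, ← mulVec_mixMatrix_rowB] at hj
    exact hj.elim (· (hcoeff _ (by omega) _)) (· (hcoeff _ (by omega) _))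
  have hu : ∀ m : Fin (d + 1), u m.castSucc.castSucc = C ((u m.castSucc.castSucc).coeff 0) := by
    intro m
    refine eq_C_of_natDegree_le_zero ((natDegree_le_iff_coeff_eq_zero).2 fun j hj => ?_)
    simpa using hcoeff j hj m.castSucc.castSucc
  refine ⟨fun m => (u m.castSucc.castSucc).coeff 0, ?_⟩
  ext j : 1
  simp only [vecMul, dotProduct]
  conv_lhs => rw [Fin.sum_univ_castSucc, Fin.sum_univ_castSucc]
  rw [hAB.1, hAB.2, zero_mul, zero_mul, add_zero, add_zero]
  exact sum_congr rfl fun m _ => by rw [hu m]; rfl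

theorem isReduced_genMatrix (hq : d + 4 ≤ Fintype.card F) : isReduced (genMatrix F d) := by
  refine ⟨⟨_, genMatrix_mul_rightInverse hq⟩, fun G' hG' hcode => ?_⟩
  rw [convDegree_genMatrix]
  by_contra! hlt
  have hconst : d + 2 ≤ #{r | rowDegree G' r = 0} := by
    have hpos : #{r | rowDegree G' r ≠ 0} ≤ convDegree G' := by
      rw [card_filter, convDegree]
      exact sum_le_sum fun r _ => by split_ifs <;> omega
    have := card_filter_add_card_filter_not (s := univ) (fun r => rowDegree G' r = 0)
    simp only [card_univ, Fintype.card_fin, ← ne_eq] at this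
    omega
  obtain ⟨T, hT, hTcard⟩ := exists_subset_card_eq hconst
  have hrows : ∀ t, ∃ c, G' (T.orderEmbOfFin hTcard t) = (C ∘ c) ᵥ* rsMatrix F d := fun t =>
    exists_eq_vecMul_rsMatrix (by omega) (hcode ▸ row_mem_convCode G' _)
      (rowDegree_eq_zero_iff.1 (mem_filter.1 (hT (T.orderEmbOfFin_mem hTcard t))).2)
  choose c hc using hrows
  have := hG'.card_le_of_rows_eq_vecMul _ (T.orderEmbOfFin hTcard).injective c hc
  omega

end Reduced

end

theorem mds_convolutional_odd_general (q n a : ℕ) (hn : n = q + 1) (ha : a = n / 2)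
    (i : ℕ) (hi1 : 2 ≤ i) (hi2 : i ≤ a - 1)
    (F : Type*) [Field F] [Fintype F] [DecidableEq F] (hF : Fintype.card F = q) :
    ∃ G : Matrix (Fin (n - 2 * i + 1)) (Fin n) (Polynomial F),
      isReduced G ∧
      convDegree G = 2 ∧
      convMemory G = 1 ∧
      (∀ v ∈ convCode G, v ≠ 0 → 2 * i + 2 ≤ polyWeight v) ∧
      (∃ v ∈ convCode G, v ≠ 0 ∧ polyWeight v = 2 * i + 2) ∧
      -- the free distance attains the generalized Singleton bound
      2 * i + 2 = (n - (n - 2 * i + 1)) * (2 / (n - 2 * i + 1) + 1) + 2 + 1 := by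
  subst hF hn ha
  obtain ⟨d, hd⟩ : ∃ d, Fintype.card F + 1 - 2 * i + 1 = d + 3 :=
    ⟨Fintype.card F - 1 - 2 * i, by omega⟩
  have hq : d + 5 ≤ Fintype.card F := by omega
  rw [hd, Nat.div_eq_of_lt (by omega : 2 < d + 3)]
  obtain ⟨w, hw, hw0, hweight⟩ := exists_polyWeight_eq (F := F) (d := d) (by omega)
  refine ⟨genMatrix F d, isReduced_genMatrix (by omega), convDegree_genMatrix,
    convMemory_genMatrix, fun v hv hv0 => ?_, ⟨w, hw, hw0, by omega⟩, by omega⟩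
  have := card_add_one_sub_le_polyWeight hq hv hv0
  omega

theorem mds_convolutional_odd (p t q n a : ℕ) (hp : p.Prime) (hodd : Odd p)
    (ht : 2 ≤ t) (hq : q = p ^ t) (hn : n = q + 1) (ha : a = n / 2)
    (i : ℕ) (hi1 : 2 ≤ i) (hi2 : i ≤ a - 1)
    (F : Type*) [Field F] [Fintype F] [DecidableEq F] (hF : Fintype.card F = q) :
    ∃ G : Matrix (Fin (n - 2 * i + 1)) (Fin n) (Polynomial F),
      isReduced G ∧
      convDegree G = 2 ∧
      convMemory G = 1 ∧
      (∀ v ∈ convCode G, v ≠ 0 → 2 * i + 2 ≤ polyWeight v) ∧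
      (∃ v ∈ convCode G, v ≠ 0 ∧ polyWeight v = 2 * i + 2) ∧
      -- the free distance attains the generalized Singleton bound
      2 * i + 2 = (n - (n - 2 * i + 1)) * (2 / (n - 2 * i + 1) + 1) + 2 + 1 :=
  mds_convolutional_odd_general q n a hn ha i hi1 hi2 F hF
end
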